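/- arXiv:1807.03525 — 5 statements merged into one kernel-verified Lean document; each statement's English description precedes it below -/
import Mathlib

section
/- If n ≥ 4 and n ≡ 5, 9 or 13 (mod 15), then the largest minimum weight among all binary LCD [n,4] codes equals ⌊8n/15⌋. -/
/-- The (Hamming) weight of a vector over `F_2`. -/
def wt {n : ℕ} (x : Fin n → ZMod 2) : ℕ :=
  Finset.card (Finset.univ.filter fun i => x i ≠ 0)

/-- The dual code of a binary code `C`, with respect to the standard inner product. -/
def dualCode {n : ℕ} (C : Submodule (ZMod 2) (Fin n → ZMod 2)) :
    Submodule (ZMod 2) (Fin n → ZMod 2) where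
  carrier := {x | ∀ y ∈ C, ∑ i, x i * y i = 0}
  add_mem' := by
    intro a b ha hb y hy
    simp [Pi.add_apply, add_mul, Finset.sum_add_distrib, ha y hy, hb y hy]
  zero_mem' := by
    intro y hy
    simp
  smul_mem' := by
    intro c a ha y hy
    simp only [Pi.smul_apply, smul_eq_mul, mul_assoc, ← Finset.mul_sum, ha y hy, mul_zero]

/-- A binary code is linear complementary dual (LCD) if it meets its dual trivially. -/
def IsLCD {n : ℕ} (C : Submodule (ZMod 2) (Fin n → ZMod 2)) : Prop :=
  C ⊓ dualCode C = ⊥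

/-- The minimum weight of a binary code: the smallest weight of a nonzero codeword. -/
noncomputable def minWt {n : ℕ} (C : Submodule (ZMod 2) (Fin n → ZMod 2)) : ℕ :=
  sInf {w | ∃ x ∈ C, x ≠ 0 ∧ wt x = w}

/-- `dLCD n k` is the largest minimum weight among all binary LCD `[n,k]` codes. -/
noncomputable def dLCD (n k : ℕ) : ℕ :=
  sSup {d | ∃ C : Submodule (ZMod 2) (Fin n → ZMod 2),
    Module.finrank (ZMod 2) C = k ∧ IsLCD C ∧ minWt C = d}

/-!
Every coordinate is nonzero on at most half of the codewords, so averaging the weights of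
the sixteen codewords of an `[n, 4, d]` code gives Plotkin's bound `15 d ≤ 8 n`. Conversely, write
`n = 15 m + r` with `r ∈ {5, 9, 13}`. The `[15, 4, 8]` simplex code has zero Gram matrix and all
its nonzero codewords have weight `8`; concatenating `m` copies of it with a small `[r, 4, ⌊8r/15⌋]`
code whose Gram matrix is nonsingular yields an LCD `[n, 4, 8 m + ⌊8r/15⌋]` code, and
`8 m + ⌊8r/15⌋ = ⌊8n/15⌋`.
-/

open Matrix Finset

theorem ZMod.add_eq_zero_of_ne_zero_mod_two :
    ∀ {a b : ZMod 2}, a ≠ 0 → b ≠ 0 → a + b = 0 := by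
  decide

theorem minWt_eq_of_forall_le {n : ℕ} {C : Submodule (ZMod 2) (Fin n → ZMod 2)} {d : ℕ}
    (hle : ∀ x ∈ C, x ≠ 0 → d ≤ wt x) {x₀ : Fin n → ZMod 2} (hx₀ : x₀ ∈ C) (hx₀0 : x₀ ≠ 0)
    (hwt : wt x₀ = d) : minWt C = d :=
  le_antisymm (Nat.sInf_le ⟨x₀, hx₀, hx₀0, hwt⟩) <|
    le_csInf ⟨d, x₀, hx₀, hx₀0, hwt⟩ fun _ ⟨x, hx, hx0, hw⟩ => hw ▸ hle x hx hx0

section Plotkin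

variable {n : ℕ} (C : Submodule (ZMod 2) (Fin n → ZMod 2)) [Fintype C]

theorem two_mul_card_filter_apply_ne_zero_le (i : Fin n) :
    2 * #{x : C | (x : Fin n → ZMod 2) i ≠ 0} ≤ Fintype.card C := by
  have hsplit := card_filter_add_card_filter_not (s := (univ : Finset C))
    (fun x : C => (x : Fin n → ZMod 2) i ≠ 0)
  rw [card_univ] at hsplit
  rcases Finset.eq_empty_or_nonempty (univ.filter fun x : C => (x : Fin n → ZMod 2) i ≠ 0)
    with hempty | ⟨x₀, hx₀⟩
  · rw [hempty]; simp
  -- Translation by `x₀` maps the codewords with `x i ≠ 0` injectively to those with `x i = 0`.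
  have hle :
      #{x : C | (x : Fin n → ZMod 2) i ≠ 0} ≤ #{x : C | ¬(x : Fin n → ZMod 2) i ≠ 0} := by
    refine card_le_card_of_injOn (· + x₀) (fun x hx => ?_) (fun a _ b _ h => add_right_cancel h)
    simp only [coe_filter, mem_filter, mem_univ, true_and] at hx hx₀ ⊢
    exact not_not.2 (ZMod.add_eq_zero_of_ne_zero_mod_two hx hx₀)
  omega

theorem two_mul_sum_wt_le : 2 * ∑ x : C, wt (x : Fin n → ZMod 2) ≤ Fintype.card C * n := by
  have hswap :
      ∑ x : C, wt (x : Fin n → ZMod 2) = ∑ i, #{x : C | (x : Fin n → ZMod 2) i ≠ 0} := by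
    simp only [wt, card_filter]
    exact Finset.sum_comm
  calc 2 * ∑ x : C, wt (x : Fin n → ZMod 2)
      = ∑ i, 2 * #{x : C | (x : Fin n → ZMod 2) i ≠ 0} := by rw [hswap, mul_sum]
    _ ≤ ∑ _i : Fin n, Fintype.card C :=
        sum_le_sum fun i _ => two_mul_card_filter_apply_ne_zero_le C i
    _ = Fintype.card C * n := by simp [mul_comm]

theorem card_sub_one_mul_minWt_le_sum_wt :
    (Fintype.card C - 1) * minWt C ≤ ∑ x : C, wt (x : Fin n → ZMod 2) := by
  calc (Fintype.card C - 1) * minWt C = ∑ x ∈ univ.erase (0 : C), minWt C := by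
        simp [card_erase_of_mem]
    _ ≤ ∑ x ∈ univ.erase (0 : C), wt (x : Fin n → ZMod 2) :=
        sum_le_sum fun x hx => Nat.sInf_le ⟨x, x.2, by simpa using ne_of_mem_erase hx, rfl⟩
    _ ≤ ∑ x : C, wt (x : Fin n → ZMod 2) := sum_le_sum_of_subset (erase_subset _ _)

theorem plotkin_bound : 2 * ((Fintype.card C - 1) * minWt C) ≤ Fintype.card C * n :=
  (Nat.mul_le_mul_left 2 (card_sub_one_mul_minWt_le_sum_wt C)).trans (two_mul_sum_wt_le C)

end Plotkin

theorem fifteen_mul_minWt_le {n : ℕ} {C : Submodule (ZMod 2) (Fin n → ZMod 2)}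
    (hC : Module.finrank (ZMod 2) C = 4) : 15 * minWt C ≤ 8 * n := by
  have := Fintype.ofFinite C
  have hcard : Fintype.card C = 16 := by
    rw [Module.card_eq_pow_finrank (K := ZMod 2), hC, ZMod.card]; rfl
  have := plotkin_bound C
  rw [hcard] at this
  omega

theorem injective_vecMulLinear_of_gram {R ι κ : Type*} [CommRing R] [Fintype ι] [Fintype κ]
    (G : Matrix ι κ R) (hG : ∀ u, u ᵥ* (G * Gᵀ) = 0 → u = 0) :
    Function.Injective G.vecMulLinear :=
  (injective_iff_map_eq_zero _).2 fun u hu => hG u <| by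
    rw [← vecMul_vecMul, ← vecMulLinear_apply G, hu, zero_vecMul]

/-- Massey's criterion. -/
theorem isLCD_range_vecMulLinear {k n : ℕ} (G : Matrix (Fin k) (Fin n) (ZMod 2))
    (hG : ∀ u, u ᵥ* (G * Gᵀ) = 0 → u = 0) :
    IsLCD (LinearMap.range G.vecMulLinear) := by
  refine (Submodule.eq_bot_iff _).2 ?_
  rintro _ ⟨⟨u, rfl⟩, hdual⟩
  suffices u = 0 by simp [this]
  refine hG u (funext fun i => ?_)
  have := hdual (G i) ⟨Pi.single i 1, by simp [row]⟩
  rw [← vecMul_vecMul]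
  simpa [vecMul, dotProduct] using this

theorem wt_append {n₁ n₂ : ℕ} (a : Fin n₁ → ZMod 2) (b : Fin n₂ → ZMod 2) :
    wt (Fin.append a b) = wt a + wt b := by
  simp only [wt, card_filter, Fin.sum_univ_add, Fin.append_left, Fin.append_right]

section Concatenation

variable {R ι : Type*} {n₁ n₂ : ℕ}

def hcat (G₁ : Matrix ι (Fin n₁) R) (G₂ : Matrix ι (Fin n₂) R) : Matrix ι (Fin (n₁ + n₂)) R :=
  Matrix.of fun i => Fin.append (G₁ i) (G₂ i)

variable [NonUnitalNonAssocSemiring R] (G₁ : Matrix ι (Fin n₁) R) (G₂ : Matrix ι (Fin n₂) R)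

theorem vecMul_hcat [Fintype ι] (u : ι → R) :
    u ᵥ* hcat G₁ G₂ = Fin.append (u ᵥ* G₁) (u ᵥ* G₂) := by
  ext j
  refine Fin.addCases (fun j => ?_) (fun j => ?_) j <;>
    simp [hcat, vecMul, dotProduct]

theorem hcat_mul_transpose : hcat G₁ G₂ * (hcat G₁ G₂)ᵀ = G₁ * G₁ᵀ + G₂ * G₂ᵀ := by
  ext i j
  simp [hcat, mul_apply, Fin.sum_univ_add]

end Concatenation

/-- Its columns are the fifteen nonzero vectors of `F_2^4`. -/
def simplex4 : Matrix (Fin 4) (Fin 15) (ZMod 2) :=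
  Matrix.of fun i j => ((j + 1 : ℕ) / 2 ^ (i : ℕ) % 2 : ℕ)

theorem simplex4_mul_transpose : simplex4 * simplex4ᵀ = 0 := by
  decide

theorem wt_vecMul_simplex4 : ∀ u : Fin 4 → ZMod 2, u ≠ 0 → wt (u ᵥ* simplex4) = 8 := by
  decide

def simplexRep : (m : ℕ) → Matrix (Fin 4) (Fin (15 * m)) (ZMod 2)
  | 0 => 0
  | m + 1 => hcat (simplexRep m) simplex4

theorem simplexRep_mul_transpose (m : ℕ) : simplexRep m * (simplexRep m)ᵀ = 0 := by
  induction m with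
  | zero => ext i j; simp [simplexRep]
  | succ m ih => rw [simplexRep, hcat_mul_transpose, ih, simplex4_mul_transpose, add_zero]

theorem wt_vecMul_simplexRep {u : Fin 4 → ZMod 2} (hu : u ≠ 0) (m : ℕ) :
    wt (u ᵥ* simplexRep m) = 8 * m := by
  induction m with
  | zero => simp [simplexRep, wt]
  | succ m ih => rw [simplexRep, vecMul_hcat, wt_append, ih, wt_vecMul_simplex4 u hu]; ring

/-- A decidable, matrix-level form of "`G` generates an LCD code of minimum weight `d`". -/
def IsLCDGenerator {k n : ℕ} (G : Matrix (Fin k) (Fin n) (ZMod 2)) (d : ℕ) : Prop :=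
  (∀ u, u ᵥ* (G * Gᵀ) = 0 → u = 0) ∧ (∀ u ≠ 0, d ≤ wt (u ᵥ* G)) ∧ ∃ u ≠ 0, wt (u ᵥ* G) = d

namespace IsLCDGenerator

theorem exists_code {k n d : ℕ} {G : Matrix (Fin k) (Fin n) (ZMod 2)}
    (hG : IsLCDGenerator G d) :
    ∃ C : Submodule (ZMod 2) (Fin n → ZMod 2),
      Module.finrank (ZMod 2) C = k ∧ IsLCD C ∧ minWt C = d := by
  obtain ⟨hgram, hle, u₀, hu₀, hwt⟩ := hG
  have hinj := injective_vecMulLinear_of_gram G hgram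
  refine ⟨LinearMap.range G.vecMulLinear, ?_, isLCD_range_vecMulLinear G hgram, ?_⟩
  · rw [LinearMap.finrank_range_of_inj hinj, Module.finrank_fin_fun]
  refine minWt_eq_of_forall_le ?_ ⟨u₀, rfl⟩ (hinj.ne_iff' (map_zero _) |>.2 hu₀) hwt
  rintro _ ⟨u, rfl⟩ hx
  exact hle u (by rintro rfl; exact hx (map_zero _))

theorem hcat_simplexRep {r d : ℕ} {A : Matrix (Fin 4) (Fin r) (ZMod 2)}
    (hA : IsLCDGenerator A d) (m : ℕ) : IsLCDGenerator (hcat (simplexRep m) A) (8 * m + d) := by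
  obtain ⟨hgram, hle, u₀, hu₀, hwt⟩ := hA
  simp only [IsLCDGenerator, hcat_mul_transpose, simplexRep_mul_transpose, zero_add, vecMul_hcat,
    wt_append]
  refine ⟨hgram, fun u hu => ?_, u₀, hu₀, ?_⟩
  · rw [wt_vecMul_simplexRep hu]; exact Nat.add_le_add_left (hle u hu) _
  · rw [wt_vecMul_simplexRep hu₀, hwt]

end IsLCDGenerator

theorem exists_isLCDGenerator_of_mod_fifteen {r : ℕ} (hr : r = 5 ∨ r = 9 ∨ r = 13) :
    ∃ A : Matrix (Fin 4) (Fin r) (ZMod 2), IsLCDGenerator A (8 * r / 15) := by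
  unfold IsLCDGenerator
  rcases hr with rfl | rfl | rfl
  · exact ⟨!![1,0,1,1,1; 0,1,1,0,0; 0,1,1,1,1; 1,0,0,0,1], by decide⟩
  · exact ⟨!![1,0,1,1,1,0,1,1,0; 0,1,1,1,0,0,0,1,0; 1,1,1,0,1,1,0,1,0; 0,1,0,0,1,1,1,1,1],
      by decide⟩
  · exact ⟨!![1,0,1,0,1,0,1,0,1,1,1,0,1; 1,1,1,1,0,0,0,1,0,0,0,0,1;
      1,0,0,0,1,1,0,0,0,1,0,1,1; 0,1,1,0,1,0,1,1,0,0,1,1,1], by decide⟩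

theorem lcd_dim4_exact_general (n : ℕ)
    (h : n % 15 = 5 ∨ n % 15 = 9 ∨ n % 15 = 13) :
    dLCD n 4 = 8 * n / 15 := by
  obtain ⟨m, r, rfl, hr⟩ : ∃ m r, n = 15 * m + r ∧ (r = 5 ∨ r = 9 ∨ r = 13) :=
    ⟨n / 15, n % 15, (Nat.div_add_mod n 15).symm, h⟩
  obtain ⟨A, hA⟩ := exists_isLCDGenerator_of_mod_fifteen hr
  obtain ⟨C, hC4, hCLCD, hCd⟩ := (hA.hcat_simplexRep m).exists_code
  refine IsGreatest.csSup_eq ⟨⟨C, hC4, hCLCD, by omega⟩, ?_⟩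
  rintro _ ⟨C', hC'4, -, rfl⟩
  have := fifteen_mul_minWt_le hC'4
  omega

theorem lcd_dim4_exact (n : ℕ) (hn : 4 ≤ n)
    (h : n % 15 = 5 ∨ n % 15 = 9 ∨ n % 15 = 13) :
    dLCD n 4 = 8 * n / 15 :=
  lcd_dim4_exact_general n h
end

section
/- If n ≥ 5 and n ≡ 4 (mod 31), then the largest minimum weight among all binary LCD [n,5] codes equals ⌊16n/31⌋ − 2. -/
/-!
The upper bound is the Griesmer bound `n ≥ ∑_{i<k} ⌈d/2^i⌉`, proved with residual codes: deleting
the support of a minimum-weight codeword `c` of an `[n,k,d]` code leaves an `[n - d, k - 1]` code of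
minimum weight at least `⌈d/2⌉`, because a codeword `x ∉ {0, c}` satisfies
`wt x + wt (x + c) = wt c + 2 · (weight of x off the support of c)`. For `n = 31m + 35` and `k = 5`
it rules out `d = 16m + 17`.

The bound is attained by the code with generator matrix `[S | ⋯ | S | B]`: `m` copies of the
simplex matrix `S`, whose columns are the 31 nonzero vectors of `F_2^5`, and a `[35,5,16]` matrix
`B` with `B Bᵀ` invertible. Over `F_2` we have `S Sᵀ = 0` and every nonzero codeword of `S` has
weight 16, so the Gram matrix is `B Bᵀ` and all weights grow by `16m`; Massey's criterion
(`G Gᵀ` invertible implies LCD) finishes the proof.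
-/

open Matrix Module

section Hamming

variable {α β M : Type*} [Fintype α] [Fintype β] [Zero M] [DecidableEq M]

lemma hammingNorm_eq_sum (x : α → M) : hammingNorm x = ∑ i, if x i ≠ 0 then 1 else 0 :=
  Finset.card_filter _ _

lemma hammingNorm_comp_equiv (x : β → M) (e : α ≃ β) : hammingNorm (x ∘ e) = hammingNorm x := by
  rw [hammingNorm_eq_sum, hammingNorm_eq_sum]
  exact e.sum_comp fun i => if x i ≠ 0 then 1 else 0

lemma hammingNorm_sumElim (x : α → M) (y : β → M) :
    hammingNorm (Sum.elim x y) = hammingNorm x + hammingNorm y := by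
  rw [hammingNorm_eq_sum, hammingNorm_eq_sum, hammingNorm_eq_sum, Fintype.sum_sum_type]
  rfl

lemma hammingNorm_comp_snd (x : β → M) :
    hammingNorm (x ∘ Prod.snd : α × β → M) = Fintype.card α * hammingNorm x := by
  rw [hammingNorm_eq_sum, hammingNorm_eq_sum, Fintype.sum_prod_type]
  show (∑ _ : α, ∑ b, if x b ≠ 0 then 1 else 0) = _
  rw [Finset.sum_const, Finset.card_univ, smul_eq_mul]

end Hamming

lemma wt_eq_hammingNorm {n : ℕ} (x : Fin n → ZMod 2) : wt x = hammingNorm x := rfl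

section Griesmer

variable {ι : Type*}

/-- `griesmerLength d k = ∑_{i<k} ⌈d/2^i⌉`, in the recursive form produced by the residual-code
induction (`⌈⌈d/2⌉/2^i⌉ = ⌈d/2^(i+1)⌉`). -/
def griesmerLength : ℕ → ℕ → ℕ
  | _, 0 => 0
  | d, k + 1 => d + griesmerLength ((d + 1) / 2) k

def residualMap (c : ι → ZMod 2) : (ι → ZMod 2) →ₗ[ZMod 2] ({i // c i = 0} → ZMod 2) :=
  LinearMap.funLeft (ZMod 2) (ZMod 2) Subtype.val

lemma residualMap_self (c : ι → ZMod 2) : residualMap c c = 0 := funext fun i => i.2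

variable [Fintype ι]

lemma hammingNorm_add_hammingNorm_add (c x : ι → ZMod 2) :
    hammingNorm x + hammingNorm (x + c) = hammingNorm c + 2 * hammingNorm (residualMap c x) := by
  have hres : ∑ i, (if c i = 0 then (if x i ≠ 0 then 1 else 0) else 0) =
      hammingNorm (residualMap c x) := by
    rw [← Finset.sum_filter, hammingNorm_eq_sum]
    exact Finset.sum_subtype _ (by simp) _
  have pointwise : ∀ a b : ZMod 2, ((if a ≠ 0 then 1 else 0) + if a + b ≠ 0 then 1 else 0) =
      (if b ≠ 0 then 1 else 0) + 2 * if b = 0 then (if a ≠ 0 then 1 else 0) else 0 := by decide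
  simp only [← hres, hammingNorm_eq_sum, Finset.mul_sum, ← Finset.sum_add_distrib, Pi.add_apply]
  exact Finset.sum_congr rfl fun i _ => pointwise (x i) (c i)

lemma card_eq_hammingNorm_add_card (c : ι → ZMod 2) :
    Fintype.card ι = hammingNorm c + Fintype.card {i // c i = 0} := by
  rw [hammingNorm, Fintype.card_subtype, add_comm, Finset.card_filter_add_card_filter_not]
  rfl

section MinimalCodeword

variable {C : Submodule (ZMod 2) (ι → ZMod 2)} {c : ι → ZMod 2}

lemma eq_zero_or_add_eq_zero_of_residualMap_eq_zero
    (hmin : ∀ x ∈ C, x ≠ 0 → hammingNorm c ≤ hammingNorm x) (hcC : c ∈ C) {x : ι → ZMod 2}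
    (hx : x ∈ C) (hres : residualMap c x = 0) : x = 0 ∨ x + c = 0 := by
  by_contra! hne
  have h1 := hmin x hx hne.1
  have h2 := hmin (x + c) (C.add_mem hx hcC) hne.2
  have hsum := hammingNorm_add_hammingNorm_add c x
  rw [hres, hammingNorm_zero] at hsum
  exact hne.1 (hammingNorm_eq_zero.1 (by omega))

lemma le_hammingNorm_residualMap
    (hmin : ∀ x ∈ C, x ≠ 0 → hammingNorm c ≤ hammingNorm x) (hcC : c ∈ C) {x : ι → ZMod 2}
    (hx : x ∈ C) (hres : residualMap c x ≠ 0) :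
    (hammingNorm c + 1) / 2 ≤ hammingNorm (residualMap c x) := by
  have hx0 : x ≠ 0 := by rintro rfl; exact hres (map_zero _)
  have hxc : x + c ≠ 0 := by
    intro h
    exact hres (by simpa [residualMap_self] using congrArg (residualMap c) h)
  have h1 := hmin x hx hx0
  have h2 := hmin (x + c) (C.add_mem hx hcC) hxc
  have hsum := hammingNorm_add_hammingNorm_add c x
  omega

lemma finrank_le_finrank_map_residualMap_add_one
    (hmin : ∀ x ∈ C, x ≠ 0 → hammingNorm c ≤ hammingNorm x) (hcC : c ∈ C) :
    finrank (ZMod 2) C ≤ finrank (ZMod 2) (C.map (residualMap c)) + 1 := by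
  set f := (residualMap c).domRestrict C
  have hker : LinearMap.ker f ≤ Submodule.span (ZMod 2) {⟨c, hcC⟩} := by
    intro x hx
    rcases eq_zero_or_add_eq_zero_of_residualMap_eq_zero hmin hcC x.2 hx with h | h
    · rw [Submodule.coe_eq_zero.1 h]
      exact zero_mem _
    · rw [eq_neg_of_add_eq_zero_left (a := x) (b := ⟨c, hcC⟩) (Subtype.ext h)]
      exact Submodule.neg_mem _ (Submodule.mem_span_singleton_self _)
  have := (Submodule.finrank_mono hker).trans (finrank_span_le_card _)
  rw [Set.toFinset_singleton, Finset.card_singleton] at this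
  rw [← LinearMap.finrank_range_add_finrank_ker f, LinearMap.range_domRestrict]
  omega

end MinimalCodeword

theorem griesmerLength_le_card {k d : ℕ} {C : Submodule (ZMod 2) (ι → ZMod 2)}
    (hk : k ≤ finrank (ZMod 2) C) (hd : ∀ x ∈ C, x ≠ 0 → d ≤ hammingNorm x) :
    griesmerLength d k ≤ Fintype.card ι := by
  induction k generalizing ι d with
  | zero => exact Nat.zero_le _
  | succ k ih =>
    obtain ⟨c₀, hc₀C, hc₀0⟩ := Submodule.exists_mem_ne_zero_of_ne_bot (p := C) <| by
      rintro rfl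
      simp at hk
    obtain ⟨c, ⟨hcC, hc0⟩, hmin⟩ :=
      Set.exists_min_image {x | x ∈ C ∧ x ≠ 0} hammingNorm (Set.toFinite _) ⟨c₀, hc₀C, hc₀0⟩
    replace hmin : ∀ x ∈ C, x ≠ 0 → hammingNorm c ≤ hammingNorm x :=
      fun x hx hx0 => hmin x ⟨hx, hx0⟩
    have hdc := hd c hcC hc0
    have hres : griesmerLength ((d + 1) / 2) k ≤ Fintype.card {i // c i = 0} := by
      have hk' := finrank_le_finrank_map_residualMap_add_one hmin hcC
      refine ih (C := C.map (residualMap c)) (by omega) ?_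
      rintro _ ⟨x, hx, rfl⟩ hx0
      have := le_hammingNorm_residualMap hmin hcC hx hx0
      omega
    rw [griesmerLength, card_eq_hammingNorm_add_card c]
    omega

end Griesmer

section Massey

variable {κ : Type*} [Fintype κ] [DecidableEq κ] {n : ℕ} {G : Matrix κ (Fin n) (ZMod 2)}

lemma vecMul_injective_of_isUnit_mul_transpose (hG : IsUnit (G * Gᵀ)) :
    Function.Injective G.vecMul := fun u v huv =>
  vecMul_injective_of_isUnit hG (by simpa only [← vecMul_vecMul] using congrArg (· ᵥ* Gᵀ) huv)

theorem isLCD_range_vecMulLinear_s3 (hG : IsUnit (G * Gᵀ)) :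
    IsLCD (LinearMap.range G.vecMulLinear) := by
  refine eq_bot_iff.2 ?_
  rintro _ ⟨⟨u, rfl⟩, horth⟩
  suffices u ᵥ* (G * Gᵀ) = 0 by
    rw [vecMul_injective_of_isUnit hG (this.trans (zero_vecMul _).symm)]
    simp
  ext j
  have := horth _ ⟨Pi.single j 1, rfl⟩
  rw [← vecMul_vecMul, vecMul_transpose]
  simpa [vecMulLinear_apply, single_one_vecMul, mulVec, dotProduct, mul_comm] using this

lemma finrank_range_vecMulLinear (hG : IsUnit (G * Gᵀ)) :
    finrank (ZMod 2) (LinearMap.range G.vecMulLinear) = Fintype.card κ := by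
  rw [LinearMap.finrank_range_of_inj (vecMul_injective_of_isUnit_mul_transpose hG),
    finrank_fintype_fun_eq_card]

end Massey

lemma submatrix_snd_mul_transpose {m ι α R : Type*} [Fintype ι] [Fintype α]
    [NonUnitalNonAssocSemiring R]
    (A : Matrix m ι R) :
    A.submatrix id (fun p : α × ι => p.2) * (A.submatrix id fun p : α × ι => p.2)ᵀ =
      Fintype.card α • (A * Aᵀ) := by
  ext i j
  rw [Matrix.smul_apply, mul_apply, mul_apply, Fintype.sum_prod_type]
  simp

lemma submatrix_equiv_mul_transpose {m ι ι' R : Type*} [Fintype ι] [Fintype ι']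
    [NonUnitalNonAssocSemiring R]
    (A : Matrix m ι R) (e : ι' ≃ ι) : A.submatrix id e * (A.submatrix id e)ᵀ = A * Aᵀ := by
  simp [transpose_submatrix]

lemma vecMul_submatrix_id {m ι ι' R : Type*} [Fintype m] [NonUnitalNonAssocSemiring R]
    (v : m → R) (A : Matrix m ι R) (f : ι' → ι) : v ᵥ* A.submatrix id f = (v ᵥ* A) ∘ f :=
  rfl

def binaryVec (t : ℕ) : Fin 5 → ZMod 2 := fun i => (t / 2 ^ (i : ℕ) % 2 : ℕ)

def simplexMatrix : Matrix (Fin 5) (Fin 31) (ZMod 2) := Matrix.of fun i r => binaryVec (r + 1) i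

/-- The columns are those of `simplexMatrix` except `binaryVec 3 = e₀ + e₁`, followed by the unit
vectors. -/
def baseMatrix : Matrix (Fin 5) (Fin 35) (ZMod 2) :=
  Matrix.of fun i r => binaryVec (![1, 2, 4, 5, 6, 7, 8, 9, 10, 11, 12, 13, 14, 15, 16, 17, 18,
    19, 20, 21, 22, 23, 24, 25, 26, 27, 28, 29, 30, 31, 1, 2, 4, 8, 16] r) i

lemma simplexMatrix_mul_transpose : simplexMatrix * simplexMatrixᵀ = 0 := by decide

lemma hammingNorm_vecMul_simplexMatrix :
    ∀ u : Fin 5 → ZMod 2, u ≠ 0 → hammingNorm (u ᵥ* simplexMatrix) = 16 := by decide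

lemma le_hammingNorm_vecMul_baseMatrix :
    ∀ u : Fin 5 → ZMod 2, u ≠ 0 → 16 ≤ hammingNorm (u ᵥ* baseMatrix) := by decide

lemma hammingNorm_single_vecMul_baseMatrix : hammingNorm (Pi.single 0 1 ᵥ* baseMatrix) = 16 := by
  decide

lemma isUnit_baseMatrix_mul_transpose : IsUnit (baseMatrix * baseMatrixᵀ) :=
  IsUnit.of_mul_eq_one (baseMatrix * baseMatrixᵀ) (by decide)

noncomputable def lcdGenerator (m : ℕ) : Matrix (Fin 5) (Fin (31 * m + 35)) (ZMod 2) :=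
  (fromCols (simplexMatrix.submatrix id fun p : Fin m × Fin 31 => p.2) baseMatrix).submatrix
    id (Fintype.equivOfCardEq (by simp [mul_comm]))

lemma lcdGenerator_mul_transpose (m : ℕ) :
    lcdGenerator m * (lcdGenerator m)ᵀ = baseMatrix * baseMatrixᵀ := by
  rw [lcdGenerator, submatrix_equiv_mul_transpose, transpose_fromCols, fromCols_mul_fromRows]
  rw [submatrix_snd_mul_transpose, simplexMatrix_mul_transpose, smul_zero, zero_add]

lemma hammingNorm_vecMul_lcdGenerator (m : ℕ) {u : Fin 5 → ZMod 2} (hu : u ≠ 0) :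
    hammingNorm (u ᵥ* lcdGenerator m) = 16 * m + hammingNorm (u ᵥ* baseMatrix) := by
  rw [lcdGenerator, vecMul_submatrix_id, hammingNorm_comp_equiv, vecMul_fromCols,
    hammingNorm_sumElim, vecMul_submatrix_id, hammingNorm_comp_snd,
    hammingNorm_vecMul_simplexMatrix u hu, Fintype.card_fin, mul_comm]

noncomputable def lcdCode (m : ℕ) : Submodule (ZMod 2) (Fin (31 * m + 35) → ZMod 2) :=
  LinearMap.range (lcdGenerator m).vecMulLinear

lemma isUnit_lcdGenerator_mul_transpose (m : ℕ) : IsUnit (lcdGenerator m * (lcdGenerator m)ᵀ) := by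
  rw [lcdGenerator_mul_transpose]
  exact isUnit_baseMatrix_mul_transpose

lemma finrank_lcdCode (m : ℕ) : finrank (ZMod 2) (lcdCode m) = 5 := by
  rw [lcdCode, finrank_range_vecMulLinear (isUnit_lcdGenerator_mul_transpose m), Fintype.card_fin]

lemma isLCD_lcdCode (m : ℕ) : IsLCD (lcdCode m) :=
  isLCD_range_vecMulLinear_s3 (isUnit_lcdGenerator_mul_transpose m)

lemma minWt_lcdCode (m : ℕ) : minWt (lcdCode m) = 16 * m + 16 := by
  have hsingle : (Pi.single 0 1 : Fin 5 → ZMod 2) ≠ 0 := by decide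
  have hwt : hammingNorm (Pi.single 0 1 ᵥ* lcdGenerator m) = 16 * m + 16 := by
    rw [hammingNorm_vecMul_lcdGenerator m hsingle, hammingNorm_single_vecMul_baseMatrix]
  refine IsLeast.csInf_eq ⟨⟨Pi.single 0 1 ᵥ* lcdGenerator m, ⟨Pi.single 0 1, rfl⟩,
    hammingNorm_ne_zero_iff.1 (by omega), hwt⟩, ?_⟩
  rintro _ ⟨_, ⟨u, rfl⟩, hx0, rfl⟩
  have hu : u ≠ 0 := by
    rintro rfl
    exact hx0 (map_zero _)
  rw [wt_eq_hammingNorm, vecMulLinear_apply, hammingNorm_vecMul_lcdGenerator m hu]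
  have := le_hammingNorm_vecMul_baseMatrix u hu
  omega

lemma minWt_le_of_finrank_eq_five {m : ℕ} {C : Submodule (ZMod 2) (Fin (31 * m + 35) → ZMod 2)}
    (hC : finrank (ZMod 2) C = 5) : minWt C ≤ 16 * m + 16 := by
  by_contra! h
  have hlen := griesmerLength_le_card (d := 16 * m + 17) hC.ge fun x hx hx0 =>
    h.trans_le (Nat.sInf_le ⟨x, hx, hx0, rfl⟩)
  have : griesmerLength (16 * m + 17) 5 = 31 * m + 36 := by
    simp only [griesmerLength]
    omega
  rw [Fintype.card_fin, this] at hlen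
  omega

theorem lcd_dim5_minusTwo (n : ℕ) (hn : 5 ≤ n) (h : n % 31 = 4) :
    dLCD n 5 = 16 * n / 31 - 2 := by
  obtain ⟨m, rfl⟩ : ∃ m, n = 31 * m + 35 := ⟨n / 31 - 1, by omega⟩
  rw [show 16 * (31 * m + 35) / 31 - 2 = 16 * m + 16 by omega]
  refine IsGreatest.csSup_eq ⟨⟨lcdCode m, finrank_lcdCode m, isLCD_lcdCode m, minWt_lcdCode m⟩, ?_⟩
  rintro _ ⟨C, hC, -, rfl⟩
  exact minWt_le_of_finrank_eq_five hC
end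

section
/- If n ≥ 5 and n ≡ 1, 9, 13, 15, 17, 21, 23, 24, 25, 27, 28, 29 or 30 (mod 31), then the largest minimum weight d(n,5) among all binary LCD [n,5] codes satisfies d(n,5) = ⌊16n/31⌋ or d(n,5) = ⌊16n/31⌋ − 1. -/
set_option maxRecDepth 40000
set_option maxHeartbeats 1000000

open Finset

/-! ### Auxiliary machinery -/

/-- The vector in `F_2^5` whose `j`-th coordinate is the `j`-th binary digit of `m`. -/
def v (m : ℕ) : Fin 5 → ZMod 2 := fun j => ((m >>> (j : ℕ)) % 2 : ℕ)

/-- Explicit inner product on `F_2^5`. -/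
def ip (x c : Fin 5 → ZMod 2) : ZMod 2 :=
  x 0 * c 0 + x 1 * c 1 + x 2 * c 2 + x 3 * c 3 + x 4 * c 4

lemma ip_add (x y c : Fin 5 → ZMod 2) : ip (x + y) c = ip x c + ip y c := by
  simp only [ip, Pi.add_apply]; ring

lemma ip_smul (a : ZMod 2) (x c : Fin 5 → ZMod 2) : ip (a • x) c = a * ip x c := by
  simp only [ip, Pi.smul_apply, smul_eq_mul]; ring

lemma ip_single (j : Fin 5) (c : Fin 5 → ZMod 2) : ip (Pi.single j 1) c = c j := by
  fin_cases j <;> simp [ip, Pi.single_apply]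

lemma sum_range_add' {M : Type*} [AddCommMonoid M] (f : ℕ → M) (a b : ℕ) :
    ∑ i ∈ range (a + b), f i = (∑ i ∈ range a, f i) + ∑ i ∈ range b, f (a + i) := by
  induction b with
  | zero => simp
  | succ b ih =>
    rw [show a + (b + 1) = (a + b) + 1 by omega, sum_range_succ, ih, sum_range_succ, add_assoc]

lemma sum_periodic {M : Type*} [AddCommMonoid M] (f : ℕ → M) (t : ℕ) :
    ∑ i ∈ range (31 * t), f (i % 31) = t • ∑ i ∈ range 31, f i := by
  induction t with
  | zero => simp
  | succ t ih =>
    rw [show 31 * (t + 1) = 31 * t + 31 by ring, sum_range_add' (fun i => f (i % 31)), ih,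
      succ_nsmul]
    congr 1
    refine Finset.sum_congr rfl fun i hi => ?_
    rw [mem_range] at hi
    congr 1
    omega

lemma card_filter_split {α : Type*} (s : Finset α) (p : α → Prop) [DecidablePred p] :
    (s.filter p).card + (s.filter (fun a => ¬ p a)).card = s.card := by
  classical
  exact Finset.card_filter_add_card_filter_not p

lemma zmod2_eq_one : ∀ z : ZMod 2, z ≠ 0 → z = 1 := by decide

lemma factA : ∀ x : Fin 5 → ZMod 2, x ≠ 0 →
    (∑ i ∈ range 31, if ip x (v (i + 1)) ≠ 0 then (1 : ℕ) else 0) = 16 := by decide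

lemma factB : ∀ x y : Fin 5 → ZMod 2,
    ∑ i ∈ range 31, ip x (v (i + 1)) * ip y (v (i + 1)) = 0 := by decide

/-! ### Upper bound: any 5-dimensional code has minimum weight at most `⌊16n/31⌋`. -/

lemma minWt_le {n : ℕ} (C : Submodule (ZMod 2) (Fin n → ZMod 2))
    (hC : Module.finrank (ZMod 2) C = 5) : minWt C ≤ 16 * n / 31 := by
  classical
  have hcardC : Fintype.card C = 32 := by
    have h := Module.card_eq_pow_finrank (K := ZMod 2) (V := C)
    rw [hC] at h
    simpa using h
  obtain ⟨Cs, hCsdef⟩ : ∃ Cs : Finset (Fin n → ZMod 2),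
      Cs = univ.filter (fun x => x ∈ C) := ⟨_, rfl⟩
  have hcard : Cs.card = 32 := by
    rw [hCsdef, ← hcardC]
    exact (Fintype.card_subtype _).symm
  have key : ∀ i : Fin n, (Cs.filter (fun x => x i ≠ 0)).card ≤ 16 := by
    intro i
    by_cases hA : (Cs.filter (fun x => x i ≠ 0)).Nonempty
    · obtain ⟨a, ha⟩ := hA
      rw [mem_filter] at ha
      have haC : a ∈ C := by
        have := ha.1
        rw [hCsdef, mem_filter] at this
        exact this.2
      have hmaps : ∀ x ∈ Cs.filter (fun x => x i ≠ 0),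
          x + a ∈ Cs.filter (fun x => ¬ x i ≠ 0) := by
        intro x hx
        rw [mem_filter] at hx ⊢
        have hxC : x ∈ C := by
          have := hx.1
          rw [hCsdef, mem_filter] at this
          exact this.2
        refine ⟨by rw [hCsdef, mem_filter]; exact ⟨mem_univ _, C.add_mem hxC haC⟩, ?_⟩
        have h1 : x i = 1 := zmod2_eq_one _ hx.2
        have h2 : a i = 1 := zmod2_eq_one _ ha.2
        simp only [Pi.add_apply, h1, h2, not_not]
        decide
      have hinj : Set.InjOn (fun x => x + a) ↑(Cs.filter (fun x => x i ≠ 0)) := by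
        intro x _ y _ hxy
        exact add_right_cancel hxy
      have hle := Finset.card_le_card_of_injOn (fun x => x + a) hmaps hinj
      have hsplit := card_filter_split Cs (fun x => x i ≠ 0)
      linarith
    · rw [Finset.not_nonempty_iff_eq_empty] at hA
      simp [hA]
  have h0 : (0 : Fin n → ZMod 2) ∈ Cs := by
    rw [hCsdef, mem_filter]; exact ⟨mem_univ _, C.zero_mem⟩
  obtain ⟨Cs', hCs'def⟩ : ∃ Cs' : Finset (Fin n → ZMod 2), Cs' = Cs.erase 0 := ⟨_, rfl⟩
  have hcard' : Cs'.card = 31 := by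
    rw [hCs'def, Finset.card_erase_of_mem h0, hcard]
  have hmin : ∀ x ∈ Cs', minWt C ≤ wt x := by
    intro x hx
    rw [hCs'def, Finset.mem_erase] at hx
    have hxC : x ∈ C := by
      have := hx.2
      rw [hCsdef, mem_filter] at this
      exact this.2
    exact Nat.sInf_le ⟨x, hxC, hx.1, rfl⟩
  have hsum : 31 * minWt C ≤ ∑ x ∈ Cs', wt x := by
    calc 31 * minWt C = ∑ _x ∈ Cs', minWt C := by
          rw [Finset.sum_const, hcard', smul_eq_mul]
      _ ≤ ∑ x ∈ Cs', wt x := Finset.sum_le_sum hmin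
  have hsum2 : ∑ x ∈ Cs', wt x ≤ 16 * n := by
    have hwt : ∀ x : Fin n → ZMod 2, wt x = ∑ i : Fin n, if x i ≠ 0 then (1 : ℕ) else 0 :=
      fun x => Finset.card_filter _ _
    calc ∑ x ∈ Cs', wt x
        = ∑ i : Fin n, ∑ x ∈ Cs', (if x i ≠ 0 then (1 : ℕ) else 0) := by
          simp_rw [hwt]; rw [Finset.sum_comm]
      _ ≤ ∑ _i : Fin n, (16 : ℕ) := by
          refine Finset.sum_le_sum fun i _ => ?_
          rw [← Finset.card_filter]
          calc (Cs'.filter (fun x => x i ≠ 0)).card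
              ≤ (Cs.filter (fun x => x i ≠ 0)).card :=
                Finset.card_le_card
                  (Finset.filter_subset_filter _ (hCs'def ▸ Finset.erase_subset _ _))
            _ ≤ 16 := key i
      _ = 16 * n := by simp [mul_comm]
  have : 31 * minWt C ≤ 16 * n := le_trans hsum hsum2
  omega

lemma dLCD_upper (n : ℕ) : dLCD n 5 ≤ 16 * n / 31 := by
  apply csSup_le'
  rintro d ⟨C, h1, -, rfl⟩
  exact minWt_le C h1

/-! ### Lower bound via explicit constructions. -/

lemma dLCD_lower (t s m : ℕ) (S : ℕ → Fin 5 → ZMod 2)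
    (hminS : ∀ x : Fin 5 → ZMod 2, x ≠ 0 →
      m ≤ ∑ i ∈ range s, (if ip x (S i) ≠ 0 then (1 : ℕ) else 0))
    (hnd : ∀ x : Fin 5 → ZMod 2, x ≠ 0 → ∃ j : Fin 5,
      ∑ i ∈ range s, ip x (S i) * (S i j) ≠ 0) :
    16 * t + m ≤ dLCD (31 * t + s) 5 := by
  classical
  set n := 31 * t + s with hn
  set colN : ℕ → Fin 5 → ZMod 2 :=
    fun i => if i < 31 * t then v (i % 31 + 1) else S (i - 31 * t) with hcolN
  set φ : (Fin 5 → ZMod 2) →ₗ[ZMod 2] (Fin n → ZMod 2) :=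
    { toFun := fun x i => ip x (colN i)
      map_add' := fun x y => funext fun i => ip_add x y (colN i)
      map_smul' := fun a x => funext fun i => ip_smul a x (colN i) } with hφ
  have hφapp : ∀ (x : Fin 5 → ZMod 2) (i : Fin n), φ x i = ip x (colN i) := fun _ _ => rfl
  -- the total bilinear form reduces to the `S`-part
  have hBtot : ∀ x y : Fin 5 → ZMod 2,
      ∑ i ∈ range n, ip x (colN i) * ip y (colN i)
        = ∑ i ∈ range s, ip x (S i) * ip y (S i) := by
    intro x y
    rw [hn, sum_range_add']
    have h1 : ∑ i ∈ range (31 * t), ip x (colN i) * ip y (colN i) = 0 := by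
      have he : ∀ i ∈ range (31 * t),
          ip x (colN i) * ip y (colN i)
            = (fun j => ip x (v (j % 31 + 1)) * ip y (v (j % 31 + 1))) i := by
        intro i hi
        rw [mem_range] at hi
        simp only [hcolN, if_pos hi]
      rw [Finset.sum_congr rfl he,
        sum_periodic (fun j => ip x (v (j + 1)) * ip y (v (j + 1))) t, factB x y, smul_zero]
    have h2 : ∀ i ∈ range s,
        ip x (colN (31 * t + i)) * ip y (colN (31 * t + i)) = ip x (S i) * ip y (S i) := by
      intro i hi
      have hnot : ¬ 31 * t + i < 31 * t := by omega
      simp only [hcolN, if_neg hnot, Nat.add_sub_cancel_left]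
    rw [h1, Finset.sum_congr rfl h2, zero_add]
  -- weights
  have hwt : ∀ x : Fin 5 → ZMod 2, x ≠ 0 →
      wt (φ x) = 16 * t + ∑ i ∈ range s, (if ip x (S i) ≠ 0 then (1 : ℕ) else 0) := by
    intro x hx
    have h0 : wt (φ x) = ∑ i : Fin n, if ip x (colN (i : ℕ)) ≠ 0 then (1 : ℕ) else 0 :=
      Finset.card_filter _ _
    rw [h0, Fin.sum_univ_eq_sum_range (fun i => if ip x (colN i) ≠ 0 then (1 : ℕ) else 0) n,
      hn, sum_range_add']
    have h1 : ∑ i ∈ range (31 * t), (if ip x (colN i) ≠ 0 then (1 : ℕ) else 0) = 16 * t := by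
      have he : ∀ i ∈ range (31 * t),
          (if ip x (colN i) ≠ 0 then (1 : ℕ) else 0)
            = (fun j => if ip x (v (j % 31 + 1)) ≠ 0 then (1 : ℕ) else 0) i := by
        intro i hi
        rw [mem_range] at hi
        simp only [hcolN, if_pos hi]
      rw [Finset.sum_congr rfl he,
        sum_periodic (fun j => if ip x (v (j + 1)) ≠ 0 then (1 : ℕ) else 0) t, factA x hx,
        smul_eq_mul, mul_comm]
    have h2 : ∀ i ∈ range s,
        (if ip x (colN (31 * t + i)) ≠ 0 then (1 : ℕ) else 0)
          = (if ip x (S i) ≠ 0 then (1 : ℕ) else 0) := by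
      intro i hi
      have hnot : ¬ 31 * t + i < 31 * t := by omega
      simp only [hcolN, if_neg hnot, Nat.add_sub_cancel_left]
    rw [h1, Finset.sum_congr rfl h2]
  -- injectivity
  have hker : ∀ z : Fin 5 → ZMod 2, φ z = 0 → z = 0 := by
    intro z hz
    by_contra hz0
    obtain ⟨j, hj⟩ := hnd z hz0
    apply hj
    have hzero : ∀ i ∈ range n, ip z (colN i) * ip (Pi.single j 1) (colN i) = 0 := by
      intro i hi
      rw [mem_range] at hi
      have hzi : ip z (colN i) = 0 := congrFun hz ⟨i, hi⟩
      rw [hzi, zero_mul]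
    have hB := hBtot z (Pi.single j 1)
    rw [Finset.sum_eq_zero hzero] at hB
    calc ∑ i ∈ range s, ip z (S i) * S i j
        = ∑ i ∈ range s, ip z (S i) * ip (Pi.single j 1) (S i) :=
          Finset.sum_congr rfl fun i _ => by rw [ip_single]
      _ = 0 := hB.symm
  have hinj : Function.Injective φ := by
    rw [← LinearMap.ker_eq_bot, LinearMap.ker_eq_bot']
    exact hker
  set Csub : Submodule (ZMod 2) (Fin n → ZMod 2) := LinearMap.range φ with hCsub
  have hrank : Module.finrank (ZMod 2) Csub = 5 := by
    rw [hCsub, LinearMap.finrank_range_of_inj hinj, Module.finrank_fin_fun]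
  have hLCD : IsLCD Csub := by
    rw [IsLCD, eq_bot_iff]
    intro z hz
    rw [Submodule.mem_inf] at hz
    obtain ⟨hz1, hz2⟩ := hz
    obtain ⟨x, hx⟩ := hz1
    rw [Submodule.mem_bot]
    by_contra hz0
    have hx0 : x ≠ 0 := by
      intro hx0
      apply hz0
      rw [← hx, hx0, map_zero]
    obtain ⟨j, hj⟩ := hnd x hx0
    apply hj
    have hy : φ (Pi.single j 1) ∈ Csub := ⟨Pi.single j 1, rfl⟩
    have hd : ∑ i, z i * (φ (Pi.single j 1)) i = 0 := hz2 _ hy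
    rw [← hx] at hd
    have hd' : ∑ i : Fin n,
        (fun k : ℕ => ip x (colN k) * ip (Pi.single j 1) (colN k)) (i : ℕ) = 0 := hd
    rw [Fin.sum_univ_eq_sum_range
      (fun k => ip x (colN k) * ip (Pi.single j 1) (colN k)) n] at hd'
    rw [hBtot] at hd'
    calc ∑ i ∈ range s, ip x (S i) * S i j
        = ∑ i ∈ range s, ip x (S i) * ip (Pi.single j 1) (S i) :=
          Finset.sum_congr rfl fun i _ => by rw [ip_single]
      _ = 0 := hd'
  -- minimum weight bound
  have hminW : 16 * t + m ≤ minWt Csub := by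
    have hne : {w | ∃ x ∈ Csub, x ≠ 0 ∧ wt x = w}.Nonempty := by
      refine ⟨wt (φ (fun _ => 1)), φ (fun _ => 1), ⟨_, rfl⟩, ?_, rfl⟩
      intro h
      have := hker _ h
      exact one_ne_zero (congrFun this 0)
    have hmem := Nat.sInf_mem hne
    obtain ⟨z, hzC, hz0, hzw⟩ := hmem
    obtain ⟨x, hx⟩ := hzC
    have hx0 : x ≠ 0 := by
      intro hx0
      apply hz0
      rw [← hx, hx0, map_zero]
    rw [minWt, ← hzw, ← hx, hwt x hx0]
    have := hminS x hx0
    omega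
  -- conclude
  have hbdd : BddAbove {d | ∃ C : Submodule (ZMod 2) (Fin n → ZMod 2),
      Module.finrank (ZMod 2) C = 5 ∧ IsLCD C ∧ minWt C = d} := by
    refine ⟨16 * n / 31, ?_⟩
    rintro d ⟨C', h1, -, rfl⟩
    exact minWt_le C' h1
  have hmem : minWt Csub ∈ {d | ∃ C : Submodule (ZMod 2) (Fin n → ZMod 2),
      Module.finrank (ZMod 2) C = 5 ∧ IsLCD C ∧ minWt C = d} := ⟨Csub, hrank, hLCD, rfl⟩
  exact le_trans hminW (le_csSup hbdd hmem)

def L1 : List ℕ := [2, 3, 3, 4, 6, 6, 7, 8, 8, 9, 10, 11, 12, 13, 14, 15, 16, 17, 18, 19, 19, 20, 21, 22, 23, 24, 25, 26, 28, 29, 30, 31]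
def S1 : ℕ → Fin 5 → ZMod 2 := fun i => v (L1.getD i 1)
lemma hminS1 : ∀ x : Fin 5 → ZMod 2, x ≠ 0 →
    15 ≤ ∑ i ∈ Finset.range 32, (if ip x (S1 i) ≠ 0 then (1:ℕ) else 0) := by decide
lemma hndS1 : ∀ x : Fin 5 → ZMod 2, x ≠ 0 → ∃ j : Fin 5,
    ∑ i ∈ Finset.range 32, ip x (S1 i) * (S1 i j) ≠ 0 := by decide

def L9 : List ℕ := [17, 18, 19, 22, 23, 24, 25, 27, 30]
def S9 : ℕ → Fin 5 → ZMod 2 := fun i => v (L9.getD i 1)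
lemma hminS9 : ∀ x : Fin 5 → ZMod 2, x ≠ 0 →
    3 ≤ ∑ i ∈ Finset.range 9, (if ip x (S9 i) ≠ 0 then (1:ℕ) else 0) := by decide
lemma hndS9 : ∀ x : Fin 5 → ZMod 2, x ≠ 0 → ∃ j : Fin 5,
    ∑ i ∈ Finset.range 9, ip x (S9 i) * (S9 i j) ≠ 0 := by decide

def L13 : List ℕ := [3, 7, 8, 10, 11, 14, 23, 24, 25, 27, 29, 30, 31]
def S13 : ℕ → Fin 5 → ZMod 2 := fun i => v (L13.getD i 1)
lemma hminS13 : ∀ x : Fin 5 → ZMod 2, x ≠ 0 →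
    5 ≤ ∑ i ∈ Finset.range 13, (if ip x (S13 i) ≠ 0 then (1:ℕ) else 0) := by decide
lemma hndS13 : ∀ x : Fin 5 → ZMod 2, x ≠ 0 → ∃ j : Fin 5,
    ∑ i ∈ Finset.range 13, ip x (S13 i) * (S13 i j) ≠ 0 := by decide

def L15 : List ℕ := [1, 3, 5, 9, 10, 11, 12, 14, 15, 16, 24, 25, 26, 29, 30]
def S15 : ℕ → Fin 5 → ZMod 2 := fun i => v (L15.getD i 1)
lemma hminS15 : ∀ x : Fin 5 → ZMod 2, x ≠ 0 →
    6 ≤ ∑ i ∈ Finset.range 15, (if ip x (S15 i) ≠ 0 then (1:ℕ) else 0) := by decide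
lemma hndS15 : ∀ x : Fin 5 → ZMod 2, x ≠ 0 → ∃ j : Fin 5,
    ∑ i ∈ Finset.range 15, ip x (S15 i) * (S15 i j) ≠ 0 := by decide

def L17 : List ℕ := [3, 4, 6, 7, 8, 9, 10, 11, 12, 18, 20, 26, 27, 28, 29, 30, 31]
def S17 : ℕ → Fin 5 → ZMod 2 := fun i => v (L17.getD i 1)
lemma hminS17 : ∀ x : Fin 5 → ZMod 2, x ≠ 0 →
    7 ≤ ∑ i ∈ Finset.range 17, (if ip x (S17 i) ≠ 0 then (1:ℕ) else 0) := by decide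
lemma hndS17 : ∀ x : Fin 5 → ZMod 2, x ≠ 0 → ∃ j : Fin 5,
    ∑ i ∈ Finset.range 17, ip x (S17 i) * (S17 i j) ≠ 0 := by decide

def L21 : List ℕ := [1, 2, 3, 6, 7, 9, 10, 11, 12, 13, 15, 16, 18, 19, 20, 22, 23, 26, 27, 30, 31]
def S21 : ℕ → Fin 5 → ZMod 2 := fun i => v (L21.getD i 1)
lemma hminS21 : ∀ x : Fin 5 → ZMod 2, x ≠ 0 →
    9 ≤ ∑ i ∈ Finset.range 21, (if ip x (S21 i) ≠ 0 then (1:ℕ) else 0) := by decide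
lemma hndS21 : ∀ x : Fin 5 → ZMod 2, x ≠ 0 → ∃ j : Fin 5,
    ∑ i ∈ Finset.range 21, ip x (S21 i) * (S21 i j) ≠ 0 := by decide

def L23 : List ℕ := [3, 4, 5, 6, 8, 9, 10, 11, 12, 13, 14, 15, 16, 17, 19, 19, 23, 26, 27, 28, 29, 30, 31]
def S23 : ℕ → Fin 5 → ZMod 2 := fun i => v (L23.getD i 1)
lemma hminS23 : ∀ x : Fin 5 → ZMod 2, x ≠ 0 →
    10 ≤ ∑ i ∈ Finset.range 23, (if ip x (S23 i) ≠ 0 then (1:ℕ) else 0) := by decide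
lemma hndS23 : ∀ x : Fin 5 → ZMod 2, x ≠ 0 → ∃ j : Fin 5,
    ∑ i ∈ Finset.range 23, ip x (S23 i) * (S23 i j) ≠ 0 := by decide

def L24 : List ℕ := [1, 2, 4, 5, 7, 8, 9, 11, 14, 15, 16, 17, 18, 19, 20, 21, 22, 24, 25, 27, 28, 29, 30, 31]
def S24 : ℕ → Fin 5 → ZMod 2 := fun i => v (L24.getD i 1)
lemma hminS24 : ∀ x : Fin 5 → ZMod 2, x ≠ 0 →
    11 ≤ ∑ i ∈ Finset.range 24, (if ip x (S24 i) ≠ 0 then (1:ℕ) else 0) := by decide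
lemma hndS24 : ∀ x : Fin 5 → ZMod 2, x ≠ 0 → ∃ j : Fin 5,
    ∑ i ∈ Finset.range 24, ip x (S24 i) * (S24 i j) ≠ 0 := by decide

def L25 : List ℕ := [1, 1, 2, 3, 5, 6, 8, 9, 10, 10, 12, 14, 14, 15, 16, 19, 20, 22, 23, 24, 27, 27, 28, 29, 31]
def S25 : ℕ → Fin 5 → ZMod 2 := fun i => v (L25.getD i 1)
lemma hminS25 : ∀ x : Fin 5 → ZMod 2, x ≠ 0 →
    11 ≤ ∑ i ∈ Finset.range 25, (if ip x (S25 i) ≠ 0 then (1:ℕ) else 0) := by decide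
lemma hndS25 : ∀ x : Fin 5 → ZMod 2, x ≠ 0 → ∃ j : Fin 5,
    ∑ i ∈ Finset.range 25, ip x (S25 i) * (S25 i j) ≠ 0 := by decide

def L27 : List ℕ := [1, 2, 3, 4, 5, 7, 7, 8, 9, 10, 10, 11, 14, 15, 16, 17, 17, 19, 21, 21, 22, 23, 24, 25, 27, 29, 30]
def S27 : ℕ → Fin 5 → ZMod 2 := fun i => v (L27.getD i 1)
lemma hminS27 : ∀ x : Fin 5 → ZMod 2, x ≠ 0 →
    12 ≤ ∑ i ∈ Finset.range 27, (if ip x (S27 i) ≠ 0 then (1:ℕ) else 0) := by decide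
lemma hndS27 : ∀ x : Fin 5 → ZMod 2, x ≠ 0 → ∃ j : Fin 5,
    ∑ i ∈ Finset.range 27, ip x (S27 i) * (S27 i j) ≠ 0 := by decide

def L28 : List ℕ := [2, 2, 3, 3, 4, 4, 5, 8, 9, 10, 11, 12, 13, 14, 15, 16, 17, 18, 22, 23, 23, 24, 25, 26, 28, 29, 30, 31]
def S28 : ℕ → Fin 5 → ZMod 2 := fun i => v (L28.getD i 1)
lemma hminS28 : ∀ x : Fin 5 → ZMod 2, x ≠ 0 →
    13 ≤ ∑ i ∈ Finset.range 28, (if ip x (S28 i) ≠ 0 then (1:ℕ) else 0) := by decide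
lemma hndS28 : ∀ x : Fin 5 → ZMod 2, x ≠ 0 → ∃ j : Fin 5,
    ∑ i ∈ Finset.range 28, ip x (S28 i) * (S28 i j) ≠ 0 := by decide

def L29 : List ℕ := [1, 3, 4, 5, 6, 6, 7, 7, 8, 8, 9, 10, 11, 12, 12, 14, 16, 17, 18, 19, 22, 25, 26, 27, 28, 29, 30, 31, 31]
def S29 : ℕ → Fin 5 → ZMod 2 := fun i => v (L29.getD i 1)
lemma hminS29 : ∀ x : Fin 5 → ZMod 2, x ≠ 0 →
    13 ≤ ∑ i ∈ Finset.range 29, (if ip x (S29 i) ≠ 0 then (1:ℕ) else 0) := by decide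
lemma hndS29 : ∀ x : Fin 5 → ZMod 2, x ≠ 0 → ∃ j : Fin 5,
    ∑ i ∈ Finset.range 29, ip x (S29 i) * (S29 i j) ≠ 0 := by decide

def L30 : List ℕ := [1, 2, 3, 4, 5, 5, 6, 9, 10, 11, 12, 13, 13, 14, 15, 16, 17, 19, 20, 22, 23, 24, 25, 26, 27, 27, 28, 29, 30, 31]
def S30 : ℕ → Fin 5 → ZMod 2 := fun i => v (L30.getD i 1)
lemma hminS30 : ∀ x : Fin 5 → ZMod 2, x ≠ 0 →
    14 ≤ ∑ i ∈ Finset.range 30, (if ip x (S30 i) ≠ 0 then (1:ℕ) else 0) := by decide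
lemma hndS30 : ∀ x : Fin 5 → ZMod 2, x ≠ 0 → ∃ j : Fin 5,
    ∑ i ∈ Finset.range 30, ip x (S30 i) * (S30 i j) ≠ 0 := by decide


theorem lcd_dim5_twoValues (n : ℕ) (hn : 5 ≤ n)
    (h : n % 31 = 1 ∨ n % 31 = 9 ∨ n % 31 = 13 ∨ n % 31 = 15 ∨ n % 31 = 17 ∨ n % 31 = 21 ∨
      n % 31 = 23 ∨ n % 31 = 24 ∨ n % 31 = 25 ∨ n % 31 = 27 ∨ n % 31 = 28 ∨ n % 31 = 29 ∨
      n % 31 = 30) :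
    dLCD n 5 = 16 * n / 31 ∨ dLCD n 5 = 16 * n / 31 - 1 := by
  have hub := dLCD_upper n
  have key : 16 * n / 31 - 1 ≤ dLCD n 5 := by
    rcases h with hr|hr|hr|hr|hr|hr|hr|hr|hr|hr|hr|hr|hr
    · have he : n = 31 * ((n-32)/31) + 32 := by omega
      have hl := dLCD_lower ((n-32)/31) 32 15 S1 hminS1 hndS1
      rw [← he] at hl; omega
    · have he : n = 31 * (n/31) + 9 := by omega
      have hl := dLCD_lower (n/31) 9 3 S9 hminS9 hndS9
      rw [← he] at hl; omega
    · have he : n = 31 * (n/31) + 13 := by omega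
      have hl := dLCD_lower (n/31) 13 5 S13 hminS13 hndS13
      rw [← he] at hl; omega
    · have he : n = 31 * (n/31) + 15 := by omega
      have hl := dLCD_lower (n/31) 15 6 S15 hminS15 hndS15
      rw [← he] at hl; omega
    · have he : n = 31 * (n/31) + 17 := by omega
      have hl := dLCD_lower (n/31) 17 7 S17 hminS17 hndS17
      rw [← he] at hl; omega
    · have he : n = 31 * (n/31) + 21 := by omega
      have hl := dLCD_lower (n/31) 21 9 S21 hminS21 hndS21
      rw [← he] at hl; omega
    · have he : n = 31 * (n/31) + 23 := by omega
      have hl := dLCD_lower (n/31) 23 10 S23 hminS23 hndS23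
      rw [← he] at hl; omega
    · have he : n = 31 * (n/31) + 24 := by omega
      have hl := dLCD_lower (n/31) 24 11 S24 hminS24 hndS24
      rw [← he] at hl; omega
    · have he : n = 31 * (n/31) + 25 := by omega
      have hl := dLCD_lower (n/31) 25 11 S25 hminS25 hndS25
      rw [← he] at hl; omega
    · have he : n = 31 * (n/31) + 27 := by omega
      have hl := dLCD_lower (n/31) 27 12 S27 hminS27 hndS27
      rw [← he] at hl; omega
    · have he : n = 31 * (n/31) + 28 := by omega
      have hl := dLCD_lower (n/31) 28 13 S28 hminS28 hndS28
      rw [← he] at hl; omega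
    · have he : n = 31 * (n/31) + 29 := by omega
      have hl := dLCD_lower (n/31) 29 13 S29 hminS29 hndS29
      rw [← he] at hl; omega
    · have he : n = 31 * (n/31) + 30 := by omega
      have hl := dLCD_lower (n/31) 30 14 S30 hminS30 hndS30
      rw [← he] at hl; omega
  omega
end

section
/- There is no binary LCD [n,5,d] code for any of the parameter pairs (n,d) = (25,12), (27,13), (28,14), (29,14), (30,15); that is, for each such pair there exists no 5-dimensional linear complementary dual subspace of F_2^n whose minimum weight is d. -/
/-!
A binary code with generator matrix `G` is LCD only if the Gram matrix `G * Gᵀ` is nonsingular.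
Both `G * Gᵀ = ∑ m v • vecMulVec v v` and the weights depend only on the multiplicities `m v` of
the columns `v ∈ 𝔽₂⁵`: the codeword of the message `x` has weight `∑_{x ⬝ᵥ v = 1} m v`, whose
parity is `x ⬝ᵥ σ` with `σ = ∑ m v • v`.

If `σ = 0`, then `G * Gᵀ` is symmetric with zero diagonal and of odd size, hence singular in
characteristic `2`. Otherwise, since `∑ v, (v ⬝ᵥ z) • v = 0` over `𝔽₂⁵`, we get `G * Gᵀ *ᵥ z = 0`
as soon as `z` is orthogonal to `σ` and to every `v ∉ {0, σ}` of even multiplicity. Take `z ≠ 0`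
orthogonal to `σ` of maximal weight. If `z ⬝ᵥ v = 1` for such a `v`, summing the weights over
the hyperplanes `σᗮ`, `vᗮ` and the complement of `vᗮ` (a column `u ∉ {0, v}` is non-orthogonal to
exactly `8` vectors on either side of `vᗮ`) gives linear inequalities between `n`, `d`, `m σ`,
`m v` and the weight of `z` that have no solution for the five parameter pairs.
-/

open Finset Matrix

theorem ZMod.ne_zero_iff_eq_one {a : ZMod 2} : a ≠ 0 ↔ a = 1 := by
  revert a
  decide

theorem Finset.sum_filter_eq_zero_add_sum_filter_eq_one {α M : Type*} [AddCommMonoid M]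
    (s : Finset α) (g : α → ZMod 2) (f : α → M) :
    ∑ x ∈ s with g x = 0, f x + ∑ x ∈ s with g x = 1, f x = ∑ x ∈ s, f x := by
  rw [← sum_filter_add_sum_filter_not s (g · = 0)]
  simp only [ZMod.ne_zero_iff_eq_one]

theorem Finset.card_sub_one_mul_add_le_sum {α : Type*} [DecidableEq α] {s : Finset α}
    {f : α → ℕ} {a : α} {c : ℕ} (ha : a ∈ s) (h : ∀ x ∈ s, x ≠ a → c ≤ f x) :
    (#s - 1) * c + f a ≤ ∑ x ∈ s, f x := by
  rw [← add_sum_erase s f ha, add_comm, ← card_erase_of_mem ha, ← smul_eq_mul]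
  exact Nat.add_le_add_left (card_nsmul_le_sum _ _ _ fun x hx =>
    h x (mem_of_mem_erase hx) (ne_of_mem_erase hx)) _

theorem Finset.sum_le_card_sub_one_mul_add {α : Type*} [DecidableEq α] {s : Finset α}
    {f : α → ℕ} {a : α} {c : ℕ} (ha : a ∈ s) (h : ∀ x ∈ s, x ≠ a → f x ≤ c) :
    ∑ x ∈ s, f x ≤ (#s - 1) * c + f a := by
  rw [← add_sum_erase s f ha, add_comm, ← card_erase_of_mem ha, ← smul_eq_mul]
  exact Nat.add_le_add_right (sum_le_card_nsmul _ _ _ fun x hx =>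
    h x (mem_of_mem_erase hx) (ne_of_mem_erase hx)) _

theorem Matrix.det_eq_zero_of_isSymm_of_diag_eq_zero {ι R : Type*} [Fintype ι] [DecidableEq ι]
    [CommRing R] [CharP R 2] (hι : Odd (Fintype.card ι)) {A : Matrix ι ι R} (hA : A.IsSymm)
    (hdiag : ∀ i, A i i = 0) : A.det = 0 := by
  rw [det_apply]
  refine sum_involution (fun π _ => π⁻¹) (fun π _ => ?_) (fun π _ hπ hinv => hπ ?_)
    (fun π _ => mem_univ _) (fun π _ => inv_inv π)
  · have hprod : ∏ i, A (π⁻¹ i) i = ∏ i, A (π i) i := by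
      rw [← Equiv.prod_comp π]
      refine prod_congr rfl fun i _ => ?_
      rw [← Equiv.Perm.mul_apply, inv_mul_cancel, Equiv.Perm.one_apply]
      exact (hA.apply i (π i)).symm
    rw [Equiv.Perm.sign_inv, hprod, CharTwo.add_self_eq_zero]
  · -- an involution of a set of odd cardinality has a fixed point
    have hsq : π ^ 2 ^ 1 = 1 := by
      rw [pow_one, sq]
      nth_rewrite 1 [← hinv]
      exact inv_mul_cancel π
    obtain ⟨i, hi⟩ := Equiv.Perm.exists_fixed_point_of_prime (p := 2)
      (by rwa [← even_iff_two_dvd, Nat.not_even_iff_odd]) hsq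
    rw [prod_eq_zero (mem_univ i) (by rw [hi, hdiag]), smul_zero]

theorem exists_generatorMatrix {K : Type*} [Field K] {n k : ℕ} {C : Submodule K (Fin n → K)}
    (hC : Module.finrank K C = k) :
    ∃ G : Matrix (Fin k) (Fin n) K,
      Function.Injective G.vecMul ∧ LinearMap.range G.vecMulLinear = C := by
  let b := Module.finBasisOfFinrankEq K C hC
  refine ⟨Matrix.of fun j => (b j : Fin n → K), ?_, ?_⟩
  · exact vecMul_injective_iff.mpr (b.linearIndependent.map' C.subtype C.ker_subtype)
  · rw [range_vecMulLinear]
    change Submodule.span K (Set.range (C.subtype ∘ b)) = C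
    rw [Set.range_comp, ← Submodule.map_span, b.span_eq, Submodule.map_top, C.range_subtype]

theorem mem_dualCode_of_mulVec_eq_zero {n k : ℕ} {G : Matrix (Fin k) (Fin n) (ZMod 2)}
    {y : Fin n → ZMod 2} (hy : G *ᵥ y = 0) : y ∈ dualCode (LinearMap.range G.vecMulLinear) := by
  rintro _ ⟨x, rfl⟩
  change y ⬝ᵥ (x ᵥ* G) = 0
  rw [dotProduct_comm, ← dotProduct_mulVec, hy, dotProduct_zero]

theorem det_mul_transpose_ne_zero_of_isLCD {n k : ℕ} {G : Matrix (Fin k) (Fin n) (ZMod 2)}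
    (hG : Function.Injective G.vecMul) (hC : IsLCD (LinearMap.range G.vecMulLinear)) :
    (G * Gᵀ).det ≠ 0 := by
  intro hdet
  obtain ⟨z, hz, hGz⟩ := exists_mulVec_eq_zero_iff.mpr hdet
  have hmem : z ᵥ* G ∈ LinearMap.range G.vecMulLinear ⊓ dualCode (LinearMap.range G.vecMulLinear) :=
    ⟨⟨z, rfl⟩, mem_dualCode_of_mulVec_eq_zero (by rwa [← mulVec_transpose, mulVec_mulVec])⟩
  rw [hC, Submodule.mem_bot] at hmem
  exact hz (hG (hmem.trans (zero_vecMul G).symm))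

theorem minWt_le_wt {n : ℕ} {C : Submodule (ZMod 2) (Fin n → ZMod 2)} {x : Fin n → ZMod 2}
    (hx : x ∈ C) (hx0 : x ≠ 0) : minWt C ≤ wt x :=
  Nat.sInf_le ⟨x, hx, hx0, rfl⟩

namespace ColumnMultiplicity

section

variable {k : ℕ} (m : (Fin k → ZMod 2) → ℕ)

def weight (x : Fin k → ZMod 2) : ℕ :=
  ∑ v with x ⬝ᵥ v = 1, m v

def nonzeroLength : ℕ :=
  ∑ v ∈ univ.erase 0, m v

def paritySum : Fin k → ZMod 2 :=
  ∑ v, (m v : ZMod 2) • v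

def gram : Matrix (Fin k) (Fin k) (ZMod 2) :=
  ∑ v, (m v : ZMod 2) • vecMulVec v v

theorem weight_zero : weight m 0 = 0 := by
  simp [weight]

theorem natCast_weight (x : Fin k → ZMod 2) : (weight m x : ZMod 2) = x ⬝ᵥ paritySum m := by
  rw [weight, Nat.cast_sum, paritySum, dotProduct_sum, sum_filter]
  refine sum_congr rfl fun v _ => ?_
  rw [dotProduct_smul, smul_eq_mul]
  rcases eq_or_ne (x ⬝ᵥ v) 0 with h | h
  · simp [h]
  · simp [ZMod.ne_zero_iff_eq_one.mp h]

theorem le_weight_of_dotProduct_paritySum_eq_zero {d : ℕ} (hd : ∀ x ≠ 0, d ≤ weight m x)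
    {x : Fin k → ZMod 2} (hx : x ≠ 0) (hxσ : x ⬝ᵥ paritySum m = 0) : d + d % 2 ≤ weight m x := by
  have hpar := natCast_weight m x
  rw [hxσ, ZMod.natCast_eq_zero_iff_even] at hpar
  obtain ⟨r, hr⟩ := hpar
  have := hd x hx
  omega

theorem le_weight_of_dotProduct_paritySum_eq_one {d : ℕ} (hd : ∀ x ≠ 0, d ≤ weight m x)
    {x : Fin k → ZMod 2} (hxσ : x ⬝ᵥ paritySum m = 1) : d + (d + 1) % 2 ≤ weight m x := by
  have hx : x ≠ 0 := by rintro rfl; simp at hxσ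
  have hpar := natCast_weight m x
  rw [hxσ, ZMod.natCast_eq_one_iff_odd] at hpar
  obtain ⟨r, hr⟩ := hpar
  have := hd x hx
  omega

theorem gram_mulVec (z : Fin k → ZMod 2) :
    gram m *ᵥ z = ∑ v, ((m v : ZMod 2) * (v ⬝ᵥ z)) • v := by
  simp [gram, sum_mulVec, smul_mulVec, vecMulVec_mulVec, smul_smul]

theorem gram_isSymm : (gram m).IsSymm := by
  simp [IsSymm, gram, transpose_sum, transpose_vecMulVec]

theorem gram_apply_self (i : Fin k) : gram m i i = paritySum m i := by
  have hidem : ∀ a : ZMod 2, a * a = a := by decide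
  simp [gram, paritySum, Matrix.sum_apply, vecMulVec_apply, hidem]

theorem sum_weight (A : Finset (Fin k → ZMod 2)) :
    ∑ x ∈ A, weight m x = ∑ v, #{x ∈ A | x ⬝ᵥ v = 1} * m v := by
  simp only [weight, sum_filter]
  rw [sum_comm]
  refine sum_congr rfl fun v _ => ?_
  rw [← sum_filter, sum_const, smul_eq_mul]

end

section

variable {n k : ℕ} (G : Matrix (Fin k) (Fin n) (ZMod 2))

def ofMatrix (v : Fin k → ZMod 2) : ℕ :=
  #{i | G.col i = v}

theorem wt_vecMul (x : Fin k → ZMod 2) : wt (x ᵥ* G) = weight (ofMatrix G) x := by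
  simp only [weight, ofMatrix]
  rw [sum_card_fiberwise_eq_card_filter, wt]
  refine congrArg card (filter_congr fun i _ => ?_)
  rw [mem_filter, ← ZMod.ne_zero_iff_eq_one]
  simp only [mem_univ, true_and]
  rfl

theorem nonzeroLength_ofMatrix_le : nonzeroLength (ofMatrix G) ≤ n := by
  simp only [nonzeroLength, ofMatrix]
  rw [sum_card_fiberwise_eq_card_filter]
  exact (card_filter_le _ _).trans (card_fin n).le

theorem mul_transpose_eq_gram : G * Gᵀ = gram (ofMatrix G) := by
  ext j l
  have := sum_fiberwise' univ G.col fun v => v j * v l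
  simp only [sum_const, nsmul_eq_mul, col_apply] at this
  simpa only [gram, ofMatrix, Matrix.sum_apply, Matrix.smul_apply, vecMulVec_apply, mul_apply,
    transpose_apply, smul_eq_mul] using this.symm

end

section DimensionFive

local notation "𝔽₂⁵" => Fin 5 → ZMod 2

set_option maxRecDepth 10000 in
theorem card_filter_dotProduct_eq :
    ∀ u : 𝔽₂⁵, u ≠ 0 → ∀ a, #{x : 𝔽₂⁵ | x ⬝ᵥ u = a} = 16 := by
  decide

set_option maxRecDepth 10000 in
theorem sum_dotProduct_smul_self : ∀ z : 𝔽₂⁵, ∑ v : 𝔽₂⁵, (v ⬝ᵥ z) • v = 0 := by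
  decide

theorem card_filter_dotProduct_eq_and_dotProduct_eq {u v : 𝔽₂⁵} (hu : u ≠ 0) (hv : v ≠ 0)
    (huv : u ≠ v) (a b : ZMod 2) : #{x : 𝔽₂⁵ | x ⬝ᵥ u = a ∧ x ⬝ᵥ v = b} = 8 := by
  have hsplit (P : 𝔽₂⁵ → Prop) [DecidablePred P] (q : 𝔽₂⁵) :
      #{x | P x ∧ x ⬝ᵥ q = 0} + #{x | P x ∧ x ⬝ᵥ q = 1} = #{x | P x} := by
    simp only [card_eq_sum_ones]
    simpa only [filter_filter] using
      sum_filter_eq_zero_add_sum_filter_eq_one {x | P x} (· ⬝ᵥ q) fun _ => 1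
  have hrow (c : ZMod 2) :
      #{x : 𝔽₂⁵ | x ⬝ᵥ u = c ∧ x ⬝ᵥ v = 0} + #{x | x ⬝ᵥ u = c ∧ x ⬝ᵥ v = 1} = 16 := by
    rw [hsplit, card_filter_dotProduct_eq u hu]
  have hcol :
      #{x : 𝔽₂⁵ | x ⬝ᵥ u = 0 ∧ x ⬝ᵥ v = 0} + #{x | x ⬝ᵥ u = 1 ∧ x ⬝ᵥ v = 0} = 16 := by
    rw [← card_filter_dotProduct_eq v hv 0, ← hsplit (· ⬝ᵥ v = 0) u]
    simp only [and_comm]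
  -- `x ⬝ᵥ (u - v) = 0` says exactly that `x ⬝ᵥ u = x ⬝ᵥ v`
  have hdiag :
      #{x : 𝔽₂⁵ | x ⬝ᵥ u = 0 ∧ x ⬝ᵥ v = 0} + #{x | x ⬝ᵥ u = 1 ∧ x ⬝ᵥ v = 1} = 16 := by
    have hsub : ∀ c d e : ZMod 2, (d - e = 0 ∧ d = c ↔ d = c ∧ e = c) := by decide
    rw [← card_filter_dotProduct_eq (u - v) (sub_ne_zero.mpr huv) 0,
      ← hsplit (· ⬝ᵥ (u - v) = 0) u]
    simp only [dotProduct_sub, hsub]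
  have h0 := hrow 0
  have h1 := hrow 1
  have hcases : ∀ c : ZMod 2, c = 0 ∨ c = 1 := by decide
  rcases hcases a with rfl | rfl <;> rcases hcases b with rfl | rfl <;> omega

variable (m : 𝔽₂⁵ → ℕ)

theorem sum_weight_filter_dotProduct_eq {u : 𝔽₂⁵} (hu : u ≠ 0) (a : ZMod 2) :
    ∑ x with x ⬝ᵥ u = a, weight m x =
      #{x : 𝔽₂⁵ | x ⬝ᵥ u = a ∧ x ⬝ᵥ u = 1} * m u + 8 * ∑ v ∈ (univ.erase 0).erase u, m v := by
  rw [sum_weight, ← add_sum_erase _ _ (mem_univ 0),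
    ← add_sum_erase _ _ (mem_erase.mpr ⟨hu, mem_univ u⟩), mul_sum]
  simp only [filter_filter, dotProduct_zero, zero_ne_one, and_false, filter_false, card_empty,
    zero_mul, zero_add]
  refine congrArg _ (sum_congr rfl fun v hv => ?_)
  obtain ⟨hvu, hv0⟩ := mem_erase.mp hv
  rw [card_filter_dotProduct_eq_and_dotProduct_eq hu (mem_erase.mp hv0).1 hvu.symm]

theorem sum_weight_filter_dotProduct_eq_zero {u : 𝔽₂⁵} (hu : u ≠ 0) :
    ∑ x with x ⬝ᵥ u = 0, weight m x + 8 * m u = 8 * nonzeroLength m := by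
  rw [sum_weight_filter_dotProduct_eq m hu, nonzeroLength,
    ← add_sum_erase _ _ (mem_erase.mpr ⟨hu, mem_univ u⟩)]
  have hempty : #{x : 𝔽₂⁵ | x ⬝ᵥ u = 0 ∧ x ⬝ᵥ u = 1} = 0 :=
    card_eq_zero.mpr (filter_eq_empty_iff.mpr fun _ _ h => zero_ne_one (h.1.symm.trans h.2))
  rw [hempty]
  ring

theorem sum_weight_filter_dotProduct_eq_one {u : 𝔽₂⁵} (hu : u ≠ 0) :
    ∑ x with x ⬝ᵥ u = 1, weight m x = 8 * nonzeroLength m + 8 * m u := by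
  rw [sum_weight_filter_dotProduct_eq m hu, nonzeroLength,
    ← add_sum_erase _ _ (mem_erase.mpr ⟨hu, mem_univ u⟩)]
  simp only [and_self, card_filter_dotProduct_eq u hu]
  ring

theorem fifteen_mul_le_sum_weight {s : 𝔽₂⁵} (hs : s ≠ 0) {c : ℕ}
    (hc : ∀ x ≠ 0, x ⬝ᵥ s = 0 → c ≤ weight m x) :
    15 * c ≤ ∑ x with x ⬝ᵥ s = 0, weight m x := by
  have := card_sub_one_mul_add_le_sum (s := {x : 𝔽₂⁵ | x ⬝ᵥ s = 0}) (f := weight m) (a := 0)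
    (by simp) fun x hx hx0 => hc x hx0 (mem_filter.mp hx).2
  rw [card_filter_dotProduct_eq s hs, weight_zero, add_zero] at this
  omega

theorem sum_weight_le_fifteen_mul {s : 𝔽₂⁵} (hs : s ≠ 0) {W : ℕ}
    (hW : ∀ x ≠ 0, x ⬝ᵥ s = 0 → weight m x ≤ W) :
    ∑ x with x ⬝ᵥ s = 0, weight m x ≤ 15 * W := by
  have := sum_le_card_sub_one_mul_add (s := {x : 𝔽₂⁵ | x ⬝ᵥ s = 0}) (f := weight m) (a := 0)
    (by simp) fun x hx hx0 => hW x hx0 (mem_filter.mp hx).2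
  rw [card_filter_dotProduct_eq s hs, weight_zero, add_zero] at this
  omega

theorem le_sum_weight_filter_dotProduct_eq {s v y : 𝔽₂⁵} (hs : s ≠ 0) (hv : v ≠ 0) (hvs : v ≠ s)
    {c o : ℕ} (hc : ∀ x ≠ 0, x ⬝ᵥ s = 0 → c ≤ weight m x)
    (ho : ∀ x, x ⬝ᵥ s = 1 → o ≤ weight m x) (hy : y ⬝ᵥ s = 0) (hy0 : y = 0 ∨ y ⬝ᵥ v = 1) :
    7 * c + weight m y + 8 * o ≤ ∑ x with x ⬝ᵥ v = y ⬝ᵥ v, weight m x := by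
  rw [← sum_filter_eq_zero_add_sum_filter_eq_one _ (· ⬝ᵥ s), filter_filter, filter_filter]
  have heven := card_sub_one_mul_add_le_sum (s := {x : 𝔽₂⁵ | x ⬝ᵥ v = y ⬝ᵥ v ∧ x ⬝ᵥ s = 0})
    (f := weight m) (c := c) (a := y)
    (mem_filter.mpr ⟨mem_univ y, rfl, hy⟩) fun x hx hxy => by
      obtain ⟨hxv, hxs⟩ := (mem_filter.mp hx).2
      refine hc x (fun hx0 => ?_) hxs
      subst hx0
      rcases hy0 with rfl | hy1
      · exact hxy rfl
      · rw [hy1, zero_dotProduct] at hxv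
        exact zero_ne_one hxv
  have hodd : 8 * o ≤ ∑ x with x ⬝ᵥ v = y ⬝ᵥ v ∧ x ⬝ᵥ s = 1, weight m x := by
    rw [← card_filter_dotProduct_eq_and_dotProduct_eq hv hs hvs (y ⬝ᵥ v) 1, ← smul_eq_mul]
    exact card_nsmul_le_sum _ _ o fun x hx => ho x (mem_filter.mp hx).2.2
  rw [card_filter_dotProduct_eq_and_dotProduct_eq hv hs hvs] at heven
  omega

theorem exists_max_weight_of_dotProduct_eq_zero {s : 𝔽₂⁵} (hs : s ≠ 0) :
    ∃ z ≠ 0, z ⬝ᵥ s = 0 ∧ ∀ x ≠ 0, x ⬝ᵥ s = 0 → weight m x ≤ weight m z := by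
  obtain ⟨x, hx, hx0⟩ := exists_mem_ne (s := {x : 𝔽₂⁵ | x ⬝ᵥ s = 0})
    (by rw [card_filter_dotProduct_eq s hs]; norm_num) 0
  obtain ⟨z, hz, hmax⟩ := exists_max_image {x : 𝔽₂⁵ | x ≠ 0 ∧ x ⬝ᵥ s = 0} (weight m)
    ⟨x, mem_filter.mpr ⟨mem_univ x, hx0, (mem_filter.mp hx).2⟩⟩
  obtain ⟨hz0, hzs⟩ := (mem_filter.mp hz).2
  exact ⟨z, hz0, hzs, fun x hx0 hxs => hmax x (mem_filter.mpr ⟨mem_univ x, hx0, hxs⟩)⟩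

theorem gram_mulVec_eq_zero {z : 𝔽₂⁵} (hz : z ⬝ᵥ paritySum m = 0)
    (h : ∀ v ≠ 0, v ≠ paritySum m → Even (m v) → z ⬝ᵥ v = 0) : gram m *ᵥ z = 0 := by
  have hsplit : ∀ v : 𝔽₂⁵, ((m v : ZMod 2) * (v ⬝ᵥ z)) • v
      = (v ⬝ᵥ z) • v + (((m v : ZMod 2) + 1) * (v ⬝ᵥ z)) • v := fun v => by
    rw [← add_smul, add_one_mul, add_left_comm, CharTwo.add_self_eq_zero, add_zero]
  rw [gram_mulVec, sum_congr rfl fun v _ => hsplit v, sum_add_distrib, sum_dotProduct_smul_self,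
    zero_add]
  refine sum_eq_zero fun v _ => ?_
  rcases Nat.even_or_odd (m v) with hev | hodd
  · rw [hev.natCast_zmod_two, zero_add, one_mul, dotProduct_comm]
    obtain rfl | hv0 := eq_or_ne v 0
    · simp
    obtain rfl | hvσ := eq_or_ne v (paritySum m)
    · rw [hz, zero_smul]
    · rw [h v hv0 hvσ hev, zero_smul]
  · rw [hodd.natCast_zmod_two, CharTwo.add_self_eq_zero, zero_mul, zero_smul]

/-- In `det_gram_eq_zero`: `N = nonzeroLength m`, `a = m σ`, `b = m v` and `W = weight m z`, where
`σ = paritySum m`; `c` and `o` are lower bounds for the nonzero even and the odd weights. -/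
def WeightSystemInfeasible (n c o : ℕ) : Prop :=
  ∀ N a b W : ℕ, N ≤ n → Even b → c ≤ W → 15 * c + 8 * a ≤ 8 * N → 8 * N ≤ 15 * W + 8 * a →
    7 * c + 8 * o + 8 * b ≤ 8 * N → 7 * c + W + 8 * o ≤ 8 * N + 8 * b → False

theorem det_gram_eq_zero {n d : ℕ}
    (hinf : WeightSystemInfeasible n (d + d % 2) (d + (d + 1) % 2))
    (hN : nonzeroLength m ≤ n) (hd : ∀ x ≠ 0, d ≤ weight m x) : (gram m).det = 0 := by
  by_cases hσ : paritySum m = 0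
  · refine det_eq_zero_of_isSymm_of_diag_eq_zero (by decide) (gram_isSymm m) fun i => ?_
    rw [gram_apply_self, hσ, Pi.zero_apply]
  have hc := fun x (hx : x ≠ 0) => le_weight_of_dotProduct_paritySum_eq_zero m hd hx
  have ho := fun x => le_weight_of_dotProduct_paritySum_eq_one m hd (x := x)
  obtain ⟨z, hz0, hzσ, hzmax⟩ := exists_max_weight_of_dotProduct_eq_zero m hσ
  refine exists_mulVec_eq_zero_iff.mp ⟨z, hz0, gram_mulVec_eq_zero m hzσ fun v hv0 hvσ hv => ?_⟩
  by_contra hzv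
  replace hzv := ZMod.ne_zero_iff_eq_one.mp hzv
  have hσsum := sum_weight_filter_dotProduct_eq_zero m hσ
  have hv0sum := sum_weight_filter_dotProduct_eq_zero m hv0
  have hv1sum := sum_weight_filter_dotProduct_eq_one m hv0
  have h1 := fifteen_mul_le_sum_weight m hσ hc
  have h2 := sum_weight_le_fifteen_mul m hσ hzmax
  have h3 := le_sum_weight_filter_dotProduct_eq m hσ hv0 hvσ hc ho (zero_dotProduct _) (.inl rfl)
  have h4 := le_sum_weight_filter_dotProduct_eq m hσ hv0 hvσ hc ho hzσ (.inr hzv)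
  rw [zero_dotProduct, weight_zero] at h3
  rw [hzv] at h4
  exact hinf (nonzeroLength m) (m (paritySum m)) (m v) (weight m z) hN hv (hc z hz0 hzσ)
    (by omega) (by omega) (by omega) (by omega)

end DimensionFive

end ColumnMultiplicity

open ColumnMultiplicity

theorem no_lcd_dim5_codes (n d : ℕ)
    (h : (n, d) = (25, 12) ∨ (n, d) = (27, 13) ∨ (n, d) = (28, 14) ∨ (n, d) = (29, 14) ∨
      (n, d) = (30, 15)) :
    ¬ ∃ C : Submodule (ZMod 2) (Fin n → ZMod 2),
      Module.finrank (ZMod 2) C = 5 ∧ IsLCD C ∧ minWt C = d := by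
  have hinf : WeightSystemInfeasible n (d + d % 2) (d + (d + 1) % 2) := by
    rcases h with h | h | h | h | h <;> obtain ⟨rfl, rfl⟩ := Prod.mk.inj h <;>
      intro N a b W _ hb _ _ _ _ _ <;> rw [Nat.even_iff] at hb <;> omega
  rintro ⟨C, hk, hC, rfl⟩
  obtain ⟨G, hG, rfl⟩ := exists_generatorMatrix hk
  refine det_mul_transpose_ne_zero_of_isLCD hG hC ?_
  rw [mul_transpose_eq_gram]
  refine det_gram_eq_zero _ hinf (nonzeroLength_ofMatrix_le G) fun x hx => ?_
  rw [← wt_vecMul]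
  exact minWt_le_wt ⟨x, rfl⟩ fun h0 => hx (hG (h0.trans (zero_vecMul G).symm))
end

section
/- For every integer t ≥ 0 there exists a binary LCD [15t+8, 4, 8t+3] code, i.e., a 4-dimensional linear complementary dual subspace of F_2^(15t+8) with minimum weight 8t+3. -/
namespace LCDAux

/-- An LCD `[8,4,3]` generator matrix. -/
def Amat : Fin 4 → Fin 8 → ZMod 2 :=
  ![![1,0,0,1,0,1,0,1], ![0,1,0,1,0,1,1,1], ![0,1,1,1,0,0,0,0], ![1,0,1,0,1,1,1,0]]

/-- The simplex `[15,4,8]` generator matrix (columns = nonzero vectors of `F_2^4`). -/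
def smp : Fin 4 → Fin 15 → ZMod 2 := fun i c => if Nat.testBit (c.1 + 1) i.1 then 1 else 0

def W15 (m : Fin 4 → ZMod 2) : ℕ :=
  (Finset.univ.filter fun c : Fin 15 => (∑ i, m i * smp i c) ≠ 0).card
def W8 (m : Fin 4 → ZMod 2) : ℕ :=
  (Finset.univ.filter fun j : Fin 8 => (∑ i, m i * Amat i j) ≠ 0).card

lemma l1 : ∀ m : Fin 4 → ZMod 2, m ≠ 0 → W15 m = 8 := by decide
lemma l2 : ∀ m : Fin 4 → ZMod 2, m ≠ 0 → 3 ≤ W8 m := by decide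
lemma l3 : W8 ![0,0,1,0] = 3 := by decide
lemma l3' : (![0,0,1,0] : Fin 4 → ZMod 2) ≠ 0 := by decide
lemma l4 : ∀ m : Fin 4 → ZMod 2, (∀ j, ∑ i, m i * Amat i j = 0) → m = 0 := by decide
lemma l5 : ∀ i i' : Fin 4, ∑ c : Fin 15, smp i c * smp i' c = 0 := by decide
lemma l6 : ∀ m : Fin 4 → ZMod 2,
    (∀ i, ∑ i', m i' * (∑ j, Amat i' j * Amat i j) = 0) → m = 0 := by decide

/-- Reindexing equivalence. -/
def eqv (t : ℕ) : (Fin t × Fin 15) ⊕ Fin 8 ≃ Fin (15 * t + 8) :=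
  ((finProdFinEquiv.sumCongr (Equiv.refl (Fin 8))).trans finSumFinEquiv).trans
    (finCongr (by ring))

/-- Generators on the structured index type. -/
def g (t : ℕ) (i : Fin 4) : (Fin t × Fin 15) ⊕ Fin 8 → ZMod 2 :=
  Sum.elim (fun p => smp i p.2) (Amat i)

/-- Generators of the code. -/
def G (t : ℕ) (i : Fin 4) : Fin (15 * t + 8) → ZMod 2 := fun j => g t i ((eqv t).symm j)

lemma comb_apply (t : ℕ) (m : Fin 4 → ZMod 2) (j : Fin (15 * t + 8)) :
    (∑ i, m i • G t i) j = ∑ i, m i * g t i ((eqv t).symm j) := by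
  simp [G, Finset.sum_apply]

lemma comb_inl (t : ℕ) (m : Fin 4 → ZMod 2) (b : Fin t) (c : Fin 15) :
    (∑ i, m i * g t i (Sum.inl (b, c))) = ∑ i, m i * smp i c := by
  simp [g]

lemma comb_inr (t : ℕ) (m : Fin 4 → ZMod 2) (j : Fin 8) :
    (∑ i, m i * g t i (Sum.inr j)) = ∑ i, m i * Amat i j := by
  simp [g]

/-- Weight of a nonzero codeword. -/
lemma wt_comb (t : ℕ) (m : Fin 4 → ZMod 2) (hm : m ≠ 0) :
    wt (∑ i, m i • G t i) = 8 * t + W8 m := by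
  unfold wt
  rw [Finset.card_filter]
  have h1 : ∀ j, (if (∑ i, m i • G t i) j ≠ 0 then 1 else 0) =
      (fun p => if (∑ i, m i * g t i p) ≠ 0 then (1 : ℕ) else 0) ((eqv t).symm j) := by
    intro j; rw [comb_apply]
  rw [Finset.sum_congr rfl fun j _ => h1 j]
  rw [Equiv.sum_comp (eqv t).symm (fun p => if (∑ i, m i * g t i p) ≠ 0 then (1 : ℕ) else 0)]
  rw [Fintype.sum_sum_type, Fintype.sum_prod_type]
  have h2 : ∀ b : Fin t, (∑ c : Fin 15,
      if (∑ i, m i * g t i (Sum.inl (b, c))) ≠ 0 then (1 : ℕ) else 0) = 8 := by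
    intro b
    have : (∑ c : Fin 15, if (∑ i, m i * smp i c) ≠ 0 then (1 : ℕ) else 0) = W15 m := by
      rw [W15, Finset.card_filter]
    calc (∑ c : Fin 15, if (∑ i, m i * g t i (Sum.inl (b, c))) ≠ 0 then (1 : ℕ) else 0)
        = ∑ c : Fin 15, if (∑ i, m i * smp i c) ≠ 0 then (1 : ℕ) else 0 := by
          refine Finset.sum_congr rfl fun c _ => ?_; rw [comb_inl]
      _ = W15 m := this
      _ = 8 := l1 m hm
  rw [Finset.sum_congr rfl fun b _ => h2 b]
  have h3 : (∑ j : Fin 8, if (∑ i, m i * g t i (Sum.inr j)) ≠ 0 then (1 : ℕ) else 0) = W8 m := by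
    rw [W8, Finset.card_filter]
    refine Finset.sum_congr rfl fun j _ => ?_; rw [comb_inr]
  rw [h3, Finset.sum_const, Finset.card_univ, Fintype.card_fin, smul_eq_mul, mul_comm]

/-- Injectivity of the encoding map. -/
lemma inj (t : ℕ) (m : Fin 4 → ZMod 2) (h : (∑ i, m i • G t i) = 0) : m = 0 := by
  apply l4
  intro j
  have := congrFun h ((eqv t) (Sum.inr j))
  rw [comb_apply] at this
  simpa [comb_inr] using this

/-- Dot product of a codeword with a generator. -/
lemma dot_comb (t : ℕ) (m : Fin 4 → ZMod 2) (i : Fin 4) :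
    (∑ j, (∑ i', m i' • G t i') j * G t i j) =
      ∑ i', m i' * (∑ jj, Amat i' jj * Amat i jj) := by
  have h1 : ∀ j, (∑ i', m i' • G t i') j * G t i j =
      (fun p => (∑ i', m i' * g t i' p) * g t i p) ((eqv t).symm j) := by
    intro j; rw [comb_apply]; rfl
  rw [Finset.sum_congr rfl fun j _ => h1 j]
  rw [Equiv.sum_comp (eqv t).symm (fun p => (∑ i', m i' * g t i' p) * g t i p)]
  have h2 : ∀ p, (∑ i', m i' * g t i' p) * g t i p =
      ∑ i', m i' * (g t i' p * g t i p) := by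
    intro p; rw [Finset.sum_mul]; exact Finset.sum_congr rfl fun i' _ => mul_assoc _ _ _
  rw [Finset.sum_congr rfl fun p _ => h2 p, Finset.sum_comm]
  refine Finset.sum_congr rfl fun i' _ => ?_
  rw [← Finset.mul_sum]
  congr 1
  rw [Fintype.sum_sum_type, Fintype.sum_prod_type]
  have h3 : ∀ b : Fin t, (∑ c : Fin 15, g t i' (Sum.inl (b, c)) * g t i (Sum.inl (b, c))) = 0 := by
    intro b; simpa [g] using l5 i' i
  rw [Finset.sum_congr rfl fun b _ => h3 b]
  simp [g]

end LCDAux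

open LCDAux in
theorem exists_lcd_15t8 (t : ℕ) :
    ∃ C : Submodule (ZMod 2) (Fin (15 * t + 8) → ZMod 2),
      Module.finrank (ZMod 2) C = 4 ∧ IsLCD C ∧ minWt C = 8 * t + 3 := by
  refine ⟨Submodule.span (ZMod 2) (Set.range (G t)), ?_, ?_, ?_⟩
  · have hli : LinearIndependent (ZMod 2) (G t) := by
      rw [Fintype.linearIndependent_iff]
      intro m hm i
      have := inj t m hm
      rw [this]; rfl
    rw [finrank_span_eq_card hli, Fintype.card_fin]
  · rw [IsLCD, Submodule.eq_bot_iff]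
    rintro x ⟨hxC, hxD⟩
    obtain ⟨m, hm⟩ := (Submodule.mem_span_range_iff_exists_fun (ZMod 2)).mp hxC
    have hm0 : m = 0 := by
      apply l6
      intro i
      have hGi : G t i ∈ Submodule.span (ZMod 2) (Set.range (G t)) :=
        Submodule.subset_span (Set.mem_range_self i)
      have := hxD (G t i) hGi
      rw [← hm] at this
      rw [← dot_comb t m i]
      exact this
    rw [← hm, hm0]
    simp
  · rw [minWt]
    have hmem : (8 * t + 3) ∈ {w | ∃ x ∈ Submodule.span (ZMod 2) (Set.range (G t)),
        x ≠ 0 ∧ wt x = w} := by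
      refine ⟨∑ i, (![0,0,1,0] : Fin 4 → ZMod 2) i • G t i, ?_, ?_, ?_⟩
      · exact Submodule.sum_mem _ fun i _ => Submodule.smul_mem _ _
          (Submodule.subset_span (Set.mem_range_self i))
      · intro h
        exact l3' (inj t _ h)
      · rw [wt_comb t _ l3', l3]
    refine le_antisymm (Nat.sInf_le hmem) (le_csInf ⟨_, hmem⟩ ?_)
    rintro w ⟨x, hxC, hx0, hwt⟩
    obtain ⟨m, hm⟩ := (Submodule.mem_span_range_iff_exists_fun (ZMod 2)).mp hxC
    have hm0 : m ≠ 0 := by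
      intro h
      apply hx0
      rw [← hm, h]
      simp
    rw [← hwt, ← hm, wt_comb t m hm0]
    exact Nat.add_le_add_left (l2 m hm0) _
end
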